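/- arXiv:2306.04046 — 12 statements merged into one kernel-verified Lean document; each statement's English description precedes it below -/
import Mathlib

section
/- For distinct positive reals x, y, z and real s > 0, the sum 1/(x^s (x−y)(x−z)) + 1/(y^s (y−z)(y−x)) + 1/(z^s (z−x)(z−y)) is strictly positive. -/
/-!
The sum is the second divided difference of `t ↦ t ^ (-s)` at `x, y, z`. For `z < y < x` it equals
the difference of the secant slopes on `[y, x]` and `[z, y]`, divided by `x - z`, which is positive
because `t ↦ t ^ (-s)` is strictly convex on `(0, ∞)`.
-/

open Set

section DivDiff

variable {𝕜 : Type*} [Field 𝕜]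

def secondDivDiff (f : 𝕜 → 𝕜) (x y z : 𝕜) : 𝕜 :=
  f x / ((x - y) * (x - z)) + f y / ((y - z) * (y - x)) + f z / ((z - x) * (z - y))

lemma secondDivDiff_swap₁₂ (f : 𝕜 → 𝕜) (x y z : 𝕜) :
    secondDivDiff f x y z = secondDivDiff f y x z := by
  unfold secondDivDiff; ring

lemma secondDivDiff_swap₂₃ (f : 𝕜 → 𝕜) (x y z : 𝕜) :
    secondDivDiff f x y z = secondDivDiff f x z y := by
  unfold secondDivDiff; ring

lemma secondDivDiff_eq_div_of_ne (f : 𝕜 → 𝕜) {x y z : 𝕜} (hxy : x ≠ y) (hyz : y ≠ z)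
    (hxz : x ≠ z) :
    secondDivDiff f x y z = ((f z - f y) / (z - y) - (f y - f x) / (y - x)) / (z - x) := by
  have := sub_ne_zero.2 hxy
  have := sub_ne_zero.2 hyz
  have := sub_ne_zero.2 hxz
  have := sub_ne_zero.2 hxy.symm
  have := sub_ne_zero.2 hyz.symm
  have := sub_ne_zero.2 hxz.symm
  unfold secondDivDiff
  field_simp
  ring

end DivDiff

section StrictConvex

variable {𝕜 : Type*} [Field 𝕜] [LinearOrder 𝕜] [IsStrictOrderedRing 𝕜] {s : Set 𝕜} {f : 𝕜 → 𝕜}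

lemma StrictConvexOn.secondDivDiff_pos_of_lt (hf : StrictConvexOn 𝕜 s f) {x y z : 𝕜}
    (hx : x ∈ s) (hz : z ∈ s) (hxy : x < y) (hyz : y < z) : 0 < secondDivDiff f x y z := by
  rw [secondDivDiff_eq_div_of_ne f hxy.ne hyz.ne (hxy.trans hyz).ne]
  exact div_pos (sub_pos.2 (hf.slope_strict_mono_adjacent hx hz hxy hyz))
    (sub_pos.2 (hxy.trans hyz))

lemma StrictConvexOn.secondDivDiff_pos (hf : StrictConvexOn 𝕜 s f) {x y z : 𝕜}
    (hx : x ∈ s) (hy : y ∈ s) (hz : z ∈ s) (hxy : x ≠ y) (hyz : y ≠ z) (hxz : x ≠ z) :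
    0 < secondDivDiff f x y z := by
  rcases hxy.lt_or_gt with hxy | hxy <;> rcases hyz.lt_or_gt with hyz | hyz <;>
    rcases hxz.lt_or_gt with hxz | hxz
  · exact hf.secondDivDiff_pos_of_lt hx hz hxy hyz
  · exact absurd (hxy.trans hyz) hxz.not_gt
  · rw [secondDivDiff_swap₂₃]
    exact hf.secondDivDiff_pos_of_lt hx hy hxz hyz
  · rw [secondDivDiff_swap₂₃, secondDivDiff_swap₁₂]
    exact hf.secondDivDiff_pos_of_lt hz hy hxz hxy
  · rw [secondDivDiff_swap₁₂]
    exact hf.secondDivDiff_pos_of_lt hy hz hxy hxz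
  · rw [secondDivDiff_swap₁₂, secondDivDiff_swap₂₃]
    exact hf.secondDivDiff_pos_of_lt hy hx hyz hxz
  · exact absurd (hxz.trans hyz) hxy.not_gt
  · rw [secondDivDiff_swap₁₂, secondDivDiff_swap₂₃, secondDivDiff_swap₁₂]
    exact hf.secondDivDiff_pos_of_lt hz hx hyz hxy

end StrictConvex

lemma Real.strictConvexOn_rpow_of_neg {p : ℝ} (hp : p < 0) :
    StrictConvexOn ℝ (Ioi 0) fun x : ℝ ↦ x ^ p := by
  refine StrictMonoOn.strictConvexOn_of_deriv (convex_Ioi 0)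
    (fun x hx ↦ (Real.continuousAt_rpow_const x p (Or.inl (ne_of_gt hx))).continuousWithinAt) ?_
  rw [interior_Ioi, Real.deriv_rpow_const']
  intro a ha b _ hab
  exact mul_lt_mul_of_neg_left (Real.rpow_lt_rpow_of_neg ha hab (by linarith)) hp

theorem reciprocal_schur_pos (x y z : ℝ) (hx : 0 < x) (hy : 0 < y) (hz : 0 < z)
    (hxy : x ≠ y) (hyz : y ≠ z) (hxz : x ≠ z) (s : ℝ) (hs : 0 < s) :
    0 < 1 / (x ^ s * (x - y) * (x - z)) + 1 / (y ^ s * (y - z) * (y - x)) +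
        1 / (z ^ s * (z - x) * (z - y)) := by
  have hrecip : ∀ t : ℝ, 0 < t → ∀ a b : ℝ, 1 / (t ^ s * a * b) = t ^ (-s) / (a * b) :=
    fun t ht a b ↦ by rw [Real.rpow_neg ht.le, mul_assoc, ← div_div, one_div]
  calc 0 < secondDivDiff (fun t : ℝ ↦ t ^ (-s)) x y z :=
        (Real.strictConvexOn_rpow_of_neg (neg_neg_of_pos hs)).secondDivDiff_pos
          hx hy hz hxy hyz hxz
    _ = _ := by rw [secondDivDiff, hrecip x hx, hrecip y hy, hrecip z hz]
end

section
/- For distinct positive reals x, y, z and real s with −1 < s < 0, the sum 1/(x^s (x−y)(x−z)) + 1/(y^s (y−z)(y−x)) + 1/(z^s (z−x)(z−y)) is strictly negative. -/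
/-!
With `f t = t ^ (-s)` the sum is the second divided difference `[x, y, z] f`. For `-1 < s < 0`
the function `f` is strictly concave on `[0, ∞)`, and the second divided difference of a strictly
concave function at distinct points is negative: for `x < y < z` it is the difference of the
slopes of `f` on `[y, z]` and on `[x, y]`, divided by `z - x`.
-/

noncomputable def divDiff2 (f : ℝ → ℝ) (x y z : ℝ) : ℝ :=
  f x / ((x - y) * (x - z)) + f y / ((y - z) * (y - x)) + f z / ((z - x) * (z - y))

theorem divDiff2_swap_left (f : ℝ → ℝ) (x y z : ℝ) : divDiff2 f x y z = divDiff2 f y x z := by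
  unfold divDiff2; ring

theorem divDiff2_swap_right (f : ℝ → ℝ) (x y z : ℝ) : divDiff2 f x y z = divDiff2 f x z y := by
  unfold divDiff2; ring

theorem divDiff2_eq_slope_sub_slope (f : ℝ → ℝ) {x y z : ℝ} (hxy : x ≠ y) (hyz : y ≠ z)
    (hxz : x ≠ z) :
    divDiff2 f x y z = ((f z - f y) / (z - y) - (f y - f x) / (y - x)) / (z - x) := by
  unfold divDiff2
  field_simp [sub_ne_zero.2 hxy, sub_ne_zero.2 hyz, sub_ne_zero.2 hxz, sub_ne_zero.2 hxy.symm,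
    sub_ne_zero.2 hyz.symm, sub_ne_zero.2 hxz.symm]
  ring

namespace StrictConcaveOn

variable {s : Set ℝ} {f : ℝ → ℝ} {x y z : ℝ}

theorem divDiff2_neg_of_lt (hf : StrictConcaveOn ℝ s f) (hx : x ∈ s) (hz : z ∈ s)
    (hxy : x < y) (hyz : y < z) : divDiff2 f x y z < 0 := by
  rw [divDiff2_eq_slope_sub_slope f hxy.ne hyz.ne (hxy.trans hyz).ne]
  exact div_neg_of_neg_of_pos (sub_neg.2 (hf.slope_anti_adjacent hx hz hxy hyz))
    (sub_pos.2 (hxy.trans hyz))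

theorem divDiff2_neg (hf : StrictConcaveOn ℝ s f) (hx : x ∈ s) (hy : y ∈ s) (hz : z ∈ s)
    (hxy : x ≠ y) (hyz : y ≠ z) (hxz : x ≠ z) : divDiff2 f x y z < 0 := by
  wlog hxy' : x < y generalizing x y
  · rw [divDiff2_swap_left]
    exact this hy hx hxy.symm hxz hyz (hxy.symm.lt_of_le (not_lt.1 hxy'))
  rcases hyz.lt_or_gt with hyz' | hzy
  · exact hf.divDiff2_neg_of_lt hx hz hxy' hyz'
  rcases hxz.lt_or_gt with hxz' | hzx
  · rw [divDiff2_swap_right]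
    exact hf.divDiff2_neg_of_lt hx hy hxz' hzy
  · rw [divDiff2_swap_right, divDiff2_swap_left]
    exact hf.divDiff2_neg_of_lt hz hy hzx hxy'

end StrictConcaveOn

theorem reciprocal_schur_neg (x y z : ℝ) (hx : 0 < x) (hy : 0 < y) (hz : 0 < z)
    (hxy : x ≠ y) (hyz : y ≠ z) (hxz : x ≠ z) (s : ℝ) (hs1 : -1 < s) (hs0 : s < 0) :
    1 / (x ^ s * (x - y) * (x - z)) + 1 / (y ^ s * (y - z) * (y - x)) +
        1 / (z ^ s * (z - x) * (z - y)) < 0 := by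
  have hsum : 1 / (x ^ s * (x - y) * (x - z)) + 1 / (y ^ s * (y - z) * (y - x)) +
      1 / (z ^ s * (z - x) * (z - y)) = divDiff2 (fun t ↦ t ^ (-s)) x y z := by
    simp only [divDiff2, Real.rpow_neg hx.le, Real.rpow_neg hy.le, Real.rpow_neg hz.le,
      mul_assoc, mul_inv, div_eq_mul_inv, one_mul]
  have hconcave := Real.strictConcaveOn_rpow (p := -s) (by linarith) (by linarith)
  rw [hsum]
  exact hconcave.divDiff2_neg (Set.mem_Ici.2 hx.le) (Set.mem_Ici.2 hy.le) (Set.mem_Ici.2 hz.le)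
    hxy hyz hxz
end

section
/- Let n ≥ 2, let x_1, …, x_n be distinct positive reals, and let s be a real number not in {0, −1, …, −(n−2)}. Then the sign of ∑_{j=1}^n 1/(x_j^s ∏_{k≠j}(x_j − x_k)) equals the sign of (−1)^{n+1} s(s+1)⋯(s+n−2). -/
open Polynomial Finset Set

lemma rolle_iter : ∀ (m : ℕ) (g : ℝ → ℝ),
    (∀ k, DifferentiableOn ℝ (deriv^[k] g) (Set.Ioi (0:ℝ))) →
    ∀ (y : Fin (m+1) → ℝ), StrictMono y → (∀ i, 0 < y i) → (∀ i, g (y i) = 0) →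
    ∃ c, 0 < c ∧ deriv^[m] g c = 0 := by
  intro m
  induction m with
  | zero => exact fun g _ y _ hy0 hg => ⟨y 0, hy0 0, hg 0⟩
  | succ m ih =>
    intro g hdiff y hmono hy0 hg
    have hcont : ContinuousOn g (Set.Ioi (0:ℝ)) := by
      simpa using (hdiff 0).continuousOn
    have H : ∀ i : Fin (m+1), ∃ z ∈ Set.Ioo (y i.castSucc) (y i.succ), deriv g z = 0 := by
      intro i
      apply exists_deriv_eq_zero (hmono (Fin.castSucc_lt_succ (i := i)))
      · exact hcont.mono fun t ht => lt_of_lt_of_le (hy0 _) ht.1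
      · rw [hg, hg]
    choose z hz hz0 using H
    have hzmono : StrictMono z := by
      rw [Fin.strictMono_iff_lt_succ]
      intro i
      calc z i.castSucc < y i.castSucc.succ := (hz i.castSucc).2
        _ = y i.succ.castSucc := by rw [Fin.succ_castSucc]
        _ < z i.succ := (hz i.succ).1
    obtain ⟨c, hc, hc0⟩ := ih (deriv g)
      (fun k => by rw [← Function.iterate_succ_apply]; exact hdiff (k+1)) z hzmono
      (fun i => (hy0 _).trans (hz i).1) hz0
    exact ⟨c, hc, by rwa [Function.iterate_succ_apply]⟩

lemma iter_deriv_rpow_sub_poly (p : ℝ) (P : Polynomial ℝ) : ∀ (m : ℕ),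
    Set.EqOn (deriv^[m] (fun x : ℝ => x ^ p - P.eval x))
      (fun x => (∏ i ∈ Finset.range m, (p - i)) * x ^ (p - m)
        - (Polynomial.derivative^[m] P).eval x) (Set.Ioi 0) := by
  intro m
  induction m with
  | zero => intro x hx; simp
  | succ m ih =>
    intro x hx
    have hx0 : (0:ℝ) < x := hx
    rw [Function.iterate_succ_apply']
    have hev : deriv^[m] (fun x : ℝ => x ^ p - P.eval x) =ᶠ[nhds x]
        (fun x => (∏ i ∈ Finset.range m, (p - i)) * x ^ (p - m)
          - (Polynomial.derivative^[m] P).eval x) :=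
      ih.eventuallyEq_of_mem (Ioi_mem_nhds hx0)
    rw [hev.deriv_eq, deriv_fun_sub, deriv_const_mul, Real.deriv_rpow_const,
      Polynomial.deriv, Function.iterate_succ_apply']
    · have hcast : p - (m:ℝ) - 1 = p - ((m:ℕ):ℝ) - 1 := rfl
      have h1 : p - (m:ℝ) - 1 = p - ((m+1 : ℕ):ℝ) := by push_cast; ring
      rw [Finset.prod_range_succ, h1]; ring
    · exact Real.differentiableAt_rpow_const_of_ne _ (ne_of_gt hx0)
    · exact ((Real.differentiableAt_rpow_const_of_ne _ (ne_of_gt hx0)).const_mul _)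
    · exact (Polynomial.differentiable _).differentiableAt

lemma iterate_derivative_eq_C {q : Polynomial ℝ} {m : ℕ} (h : q.natDegree ≤ m) :
    Polynomial.derivative^[m] q = Polynomial.C ((m.factorial : ℝ) * q.coeff m) := by
  have h0 : (Polynomial.derivative^[m] q).natDegree ≤ 0 :=
    le_trans (Polynomial.natDegree_iterate_derivative q m) (by omega)
  rw [Polynomial.eq_C_of_natDegree_le_zero h0, Polynomial.coeff_iterate_derivative]
  simp [Nat.descFactorial_self, nsmul_eq_mul]


theorem reciprocal_schur_sum_sign (n : ℕ) (hn : 2 ≤ n) (x : Fin n → ℝ)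
    (hpos : ∀ j, 0 < x j) (hinj : Function.Injective x)
    (s : ℝ) (hs : ¬∃ m : ℕ, m ≤ n - 2 ∧ s = -(m : ℝ)) :
    0 < (∑ j, 1 / (x j ^ s * ∏ k ∈ Finset.univ.erase j, (x j - x k))) *
        ((-1 : ℝ) ^ (n + 1) * ∏ i ∈ Finset.range (n - 1), (s + (i : ℝ))) := by
  obtain ⟨m, rfl⟩ : ∃ m, n = m + 2 := ⟨n - 2, by omega⟩
  have hnm1 : m + 2 - 1 = m + 1 := rfl
  set π : Fin (m+2) → ℝ := fun j => ∏ k ∈ Finset.univ.erase j, (x j - x k) with hπ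
  have hπne : ∀ j, π j ≠ 0 := fun j => Finset.prod_ne_zero_iff.mpr fun k hk =>
    sub_ne_zero.mpr fun h => (Finset.mem_erase.mp hk).1 ((hinj h).symm)
  set c : Fin (m+2) → ℝ := fun j => x j ^ (-s) * (π j)⁻¹ with hc
  set D := ∑ j, c j with hD
  have hsum : (∑ j, 1 / (x j ^ s * ∏ k ∈ Finset.univ.erase j, (x j - x k))) = D := by
    refine Finset.sum_congr rfl fun j _ => ?_
    show 1 / (x j ^ s * π j) = x j ^ (-s) * (π j)⁻¹
    rw [one_div, mul_inv, ← Real.rpow_neg (hpos j).le]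
  set P : Polynomial ℝ :=
    ∑ j, Polynomial.C (c j) * ∏ k ∈ Finset.univ.erase j, (Polynomial.X - Polynomial.C (x k))
    with hP
  have hmonic : ∀ j : Fin (m+2), (∏ k ∈ Finset.univ.erase j,
      (Polynomial.X - Polynomial.C (x k))).Monic :=
    fun j => Polynomial.monic_prod_of_monic _ _ fun k _ => Polynomial.monic_X_sub_C _
  have hcard : ∀ j : Fin (m+2), (Finset.univ.erase j).card = m + 1 := by
    intro j
    rw [Finset.card_erase_of_mem (Finset.mem_univ _)]
    simp
  have hdeg : ∀ j : Fin (m+2), (∏ k ∈ Finset.univ.erase j,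
      (Polynomial.X - Polynomial.C (x k))).natDegree = m + 1 := by
    intro j
    rw [Polynomial.natDegree_prod_of_monic _ _ fun k _ => Polynomial.monic_X_sub_C _]
    simp [hcard j]
  have hPdeg : P.natDegree ≤ m + 1 := by
    refine Polynomial.natDegree_sum_le_of_forall_le _ _ fun j _ => ?_
    exact le_trans (Polynomial.natDegree_C_mul_le _ _) (le_of_eq (hdeg j))
  have hPcoeff : P.coeff (m+1) = D := by
    rw [hP, Polynomial.finset_sum_coeff]
    refine Finset.sum_congr rfl fun j _ => ?_
    rw [Polynomial.coeff_C_mul]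
    have := (hmonic j).coeff_natDegree
    rw [hdeg j] at this
    rw [this, mul_one]
  have hPeval : ∀ j, P.eval (x j) = x j ^ (-s) := by
    intro j
    rw [hP]
    rw [Polynomial.eval_finset_sum]
    have : ∀ i, Polynomial.eval (x j)
        (Polynomial.C (c i) * ∏ k ∈ Finset.univ.erase i, (Polynomial.X - Polynomial.C (x k)))
        = c i * ∏ k ∈ Finset.univ.erase i, (x j - x k) := by
      intro i; simp [Polynomial.eval_prod]
    simp only [this]
    rw [Finset.sum_eq_single j]
    · rw [hc]
      have : (∏ k ∈ Finset.univ.erase j, (x j - x k)) = π j := rfl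
      rw [this, mul_assoc, inv_mul_cancel₀ (hπne j), mul_one]
    · intro i _ hij
      have hj : j ∈ Finset.univ.erase i := Finset.mem_erase.mpr ⟨fun h => hij h.symm, Finset.mem_univ _⟩
      rw [Finset.prod_eq_zero hj (by ring), mul_zero]
    · intro h; exact absurd (Finset.mem_univ j) h
  set g : ℝ → ℝ := fun t => t ^ (-s) - P.eval t with hg
  have hEq := iter_deriv_rpow_sub_poly (-s) P
  have hdiff : ∀ k, DifferentiableOn ℝ (deriv^[k] g) (Set.Ioi (0:ℝ)) := by
    intro k
    refine DifferentiableOn.congr (f := fun x => (∏ i ∈ Finset.range k, (-s - i)) * x ^ (-s - k)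
      - (Polynomial.derivative^[k] P).eval x) ?_ (hEq k)
    refine DifferentiableOn.sub ?_ (Polynomial.differentiable _).differentiableOn
    exact fun t ht =>
      ((Real.differentiableAt_rpow_const_of_ne _ (ne_of_gt ht)).const_mul _).differentiableWithinAt
  have hymono : StrictMono (x ∘ Tuple.sort x) :=
    (Tuple.monotone_sort x).strictMono_of_injective (hinj.comp (Tuple.sort x).injective)
  obtain ⟨c0, hc0, hder⟩ := rolle_iter (m+1) g hdiff (x ∘ Tuple.sort x) hymono
    (fun i => hpos _) (fun i => by simp [hg, hPeval, sub_eq_zero])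
  have key := hEq (m+1) (Set.mem_Ioi.mpr hc0)
  rw [hder, iterate_derivative_eq_C hPdeg, hPcoeff] at key
  simp only [Polynomial.eval_C] at key
  -- key : 0 = (∏ i ∈ range (m+1), (-s - i)) * c0 ^ (-s - (m+1)) - ((m+1)! * D)
  set Q := ∏ i ∈ Finset.range (m+1), (s + (i:ℝ)) with hQ
  have hKQ : (∏ i ∈ Finset.range (m+1), (-s - (i:ℝ))) = (-1:ℝ)^(m+1) * Q := by
    calc ∏ i ∈ Finset.range (m+1), (-s - (i:ℝ))
        = ∏ i ∈ Finset.range (m+1), (-1 : ℝ) * (s + (i:ℝ)) :=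
          Finset.prod_congr rfl fun i _ => by ring
      _ = (-1:ℝ)^(m+1) * Q := by
          rw [Finset.prod_mul_distrib, Finset.prod_const, Finset.card_range]
  have hQne : Q ≠ 0 := by
    rw [hQ]
    refine Finset.prod_ne_zero_iff.mpr fun i hi => ?_
    intro h
    refine hs ⟨i, ?_, by linarith⟩
    have := Finset.mem_range.mp hi
    omega
  set A := (-1:ℝ)^(m+1) * Q with hA
  have hAne : A ≠ 0 := mul_ne_zero (pow_ne_zero _ (by norm_num)) hQne
  have hβ : 0 < c0 ^ (-s - ((m+1:ℕ):ℝ)) := Real.rpow_pos_of_pos hc0 _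
  have hfact : (0:ℝ) < ((m+1).factorial : ℝ) := by positivity
  have hDval : D = A * c0 ^ (-s - ((m+1:ℕ):ℝ)) / ((m+1).factorial : ℝ) := by
    rw [hKQ] at key
    field_simp at key ⊢
    linarith
  have hsign : ((-1:ℝ))^(m+2+1) = (-1:ℝ)^(m+1) := by
    rw [pow_succ, pow_succ]; ring
  show 0 < (∑ j, 1 / (x j ^ s * ∏ k ∈ Finset.univ.erase j, (x j - x k))) *
      ((-1 : ℝ) ^ (m + 2 + 1) * ∏ i ∈ Finset.range (m + 1), (s + (i : ℝ)))
  rw [hsum, ← hQ, hsign, hDval, ← hA]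
  have hrw : A * c0 ^ (-s - ((m+1:ℕ):ℝ)) / ((m+1).factorial : ℝ) * A
      = A^2 * c0 ^ (-s - ((m+1:ℕ):ℝ)) / ((m+1).factorial : ℝ) := by ring
  rw [hrw]
  positivity
end

section
/- Let n ≥ 2, let f : ℝ → ℝ be (n−1) times continuously differentiable on an open interval (α, β), and suppose the (n−1)-th derivative of f is nonnegative on (α, β). Then for any distinct points x_1, …, x_n in (α, β), the divided difference ∑_{j=1}^n f(x_j)/∏_{k≠j}(x_j − x_k) is nonnegative. -/
open Set Polynomial

private lemma iteratedDerivWithin_of_isOpen'' {f : ℝ → ℝ} {s : Set ℝ} {n : ℕ} {x : ℝ}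
    (hs : IsOpen s) (hx : x ∈ s) : iteratedDerivWithin n f s x = iteratedDeriv n f x := by
  simp only [iteratedDerivWithin_eq_iteratedFDerivWithin, iteratedDeriv_eq_iteratedFDeriv,
    iteratedFDerivWithin_of_isOpen n hs hx]

private lemma iter_rolle : ∀ (m : ℕ) (g : ℝ → ℝ) (α β : ℝ),
    ContDiffOn ℝ m g (Set.Ioo α β) →
    ∀ z : Fin (m + 1) → ℝ, (∀ i, z i ∈ Set.Ioo α β) → StrictMono z →
    (∀ i, g (z i) = 0) →
    ∃ ξ ∈ Set.Ioo α β, iteratedDerivWithin m g (Set.Ioo α β) ξ = 0 := by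
  intro m
  induction m with
  | zero =>
    intro g α β _ z hz _ h0
    exact ⟨z 0, hz 0, by simpa using h0 0⟩
  | succ m IH =>
    intro g α β hg z hz hmono h0
    set s := Set.Ioo α β with hs
    have hsO : IsOpen s := isOpen_Ioo
    have hu : UniqueDiffOn ℝ s := hsO.uniqueDiffOn
    have key : ∀ i : Fin (m + 1), ∃ y,
        y ∈ Set.Ioo (z i.castSucc) (z i.succ) ∧ deriv g y = 0 := by
      intro i
      have hlt : z i.castSucc < z i.succ := hmono (Fin.castSucc_lt_succ (i := i))
      have hsub : Set.Icc (z i.castSucc) (z i.succ) ⊆ s :=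
        Set.Icc_subset_Ioo (hz i.castSucc).1 (hz i.succ).2
      have hc : ContinuousOn g (Set.Icc (z i.castSucc) (z i.succ)) :=
        hg.continuousOn.mono hsub
      obtain ⟨c, hc1, hc2⟩ := exists_deriv_eq_zero hlt hc (by rw [h0, h0])
      exact ⟨c, hc1, hc2⟩
    choose y hy1 hy2 using key
    have hys : ∀ i, y i ∈ s := by
      intro i
      exact ⟨(hz i.castSucc).1.trans (hy1 i).1, (hy1 i).2.trans (hz i.succ).2⟩
    have hymono : StrictMono y := by
      intro i j hij
      have h2 : z i.succ ≤ z j.castSucc := hmono.monotone (by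
        simp only [Fin.le_def, Fin.lt_def] at hij ⊢
        simp only [Fin.val_succ, Fin.coe_castSucc]
        omega)
      exact ((hy1 i).2.trans_le h2).trans (hy1 j).1
    have hder : ContDiffOn ℝ m (derivWithin g s) s := by
      apply hg.derivWithin hu
      norm_cast
    have h0' : ∀ i, derivWithin g s (y i) = 0 := by
      intro i
      rw [derivWithin_of_isOpen hsO (hys i)]
      exact hy2 i
    obtain ⟨ξ, hξs, hξ0⟩ := IH (derivWithin g s) α β hder y hys hymono h0'
    refine ⟨ξ, hξs, ?_⟩
    rw [iteratedDerivWithin_succ']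
    exact hξ0

private lemma contDiff_polyEval (p : ℝ[X]) {n : ℕ∞} :
    ContDiff ℝ n fun t : ℝ => p.eval t := by
  induction p using Polynomial.induction_on' with
  | add p q hp hq => simpa [Polynomial.eval_add] using hp.add hq
  | monomial k a =>
    simpa [Polynomial.eval_monomial] using contDiff_const.mul (contDiff_id.pow k)

private lemma iteratedDeriv_polyEval (k : ℕ) : ∀ (p : ℝ[X]),
    iteratedDeriv k (fun t : ℝ => p.eval t) = fun t => (Polynomial.derivative^[k] p).eval t := by
  induction k with
  | zero => intro p; simp
  | succ k ih =>
    intro p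
    rw [iteratedDeriv_succ']
    have : (deriv fun t : ℝ => p.eval t) = fun t => (Polynomial.derivative p).eval t := by
      funext t; exact Polynomial.deriv (p := p)
    rw [this, ih, Function.iterate_succ_apply]

theorem divided_difference_nonneg_of_deriv_nonneg (n : ℕ) (hn : 2 ≤ n) (α β : ℝ)
    (f : ℝ → ℝ) (hf : ContDiffOn ℝ (n - 1 : ℕ) f (Set.Ioo α β))
    (hderiv : ∀ t ∈ Set.Ioo α β, 0 ≤ iteratedDerivWithin (n - 1) f (Set.Ioo α β) t)
    (x : Fin n → ℝ) (hx : ∀ j, x j ∈ Set.Ioo α β) (hinj : Function.Injective x) :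
    0 ≤ ∑ j, f (x j) / ∏ k ∈ Finset.univ.erase j, (x j - x k) := by
  obtain ⟨m, rfl⟩ : ∃ m, n = m + 1 := ⟨n - 1, by omega⟩
  simp only [Nat.add_sub_cancel] at hf hderiv
  set s := Set.Ioo α β with hsdef
  have hsO : IsOpen s := isOpen_Ioo
  have hu : UniqueDiffOn ℝ s := hsO.uniqueDiffOn
  have hvs : Set.InjOn x ↑(Finset.univ : Finset (Fin (m + 1))) := fun a _ b _ h => hinj h
  set p : ℝ[X] := Lagrange.interpolate Finset.univ x (fun j => f (x j)) with hp
  set pe : ℝ → ℝ := fun t => p.eval t with hpe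
  have hpc : ContDiffOn ℝ m pe s := (contDiff_polyEval p).contDiffOn
  have hg : ContDiffOn ℝ m (f - pe) s := hf.sub hpc
  have hgz : ∀ j, (f - pe) (x j) = 0 := by
    intro j
    have : p.eval (x j) = f (x j) := Lagrange.eval_interpolate_at_node (r := fun j => f (x j)) hvs
      (Finset.mem_univ j)
    simp only [Pi.sub_apply, hpe, ← hp, this, sub_self]
  -- sorted points
  have hcard : (Finset.univ.image x).card = m + 1 := by
    rw [Finset.card_image_of_injective _ hinj, Finset.card_univ, Fintype.card_fin]
  set z : Fin (m + 1) → ℝ := fun i => Finset.orderEmbOfFin _ hcard i with hz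
  have hzmem : ∀ i, ∃ j, x j = z i := by
    intro i
    have : z i ∈ Finset.univ.image x := Finset.orderEmbOfFin_mem _ hcard i
    simpa using this
  have hzs : ∀ i, z i ∈ s := by
    intro i; obtain ⟨j, hj⟩ := hzmem i; rw [← hj]; exact hx j
  have hzmono : StrictMono z := (Finset.orderEmbOfFin _ hcard).strictMono
  have hz0 : ∀ i, (f - pe) (z i) = 0 := by
    intro i; obtain ⟨j, hj⟩ := hzmem i; rw [← hj]; exact hgz j
  obtain ⟨ξ, hξs, hξ0⟩ := iter_rolle m (f - pe) α β hg z hzs hzmono hz0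
  have hsplit : iteratedDerivWithin m f s ξ = iteratedDerivWithin m pe s ξ := by
    have := iteratedDerivWithin_sub hξs hu (hf.contDiffWithinAt hξs) (hpc.contDiffWithinAt hξs)
    rw [hξ0] at this
    linarith [this]
  -- the polynomial side
  have hdeg : p.degree < (m + 1 : ℕ) := by
    have : p.degree < (Finset.univ : Finset (Fin (m + 1))).card := Lagrange.degree_interpolate_lt (r := fun j => f (x j)) hvs
    simpa using this
  have hnatdeg : p.natDegree ≤ m := by
    rcases eq_or_ne p 0 with h | h
    · simp [h]
    · have := Polynomial.natDegree_lt_iff_degree_lt (n := m + 1) h |>.mpr (by exact_mod_cast hdeg)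
      omega
  have hiter : iteratedDerivWithin m pe s ξ = (Polynomial.derivative^[m] p).eval ξ := by
    rw [iteratedDerivWithin_of_isOpen'' hsO hξs, iteratedDeriv_polyEval]
  have hconst : (Polynomial.derivative^[m] p).natDegree = 0 := by
    have := Polynomial.natDegree_iterate_derivative p m
    omega
  have hevalξ : (Polynomial.derivative^[m] p).eval ξ = (m.factorial : ℝ) * p.coeff m := by
    have h1 : Polynomial.derivative^[m] p = Polynomial.C ((Polynomial.derivative^[m] p).coeff 0) :=
      Polynomial.eq_C_of_natDegree_eq_zero hconst
    rw [h1, Polynomial.eval_C, Polynomial.coeff_iterate_derivative]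
    simp [Nat.descFactorial_self, nsmul_eq_mul]
  have hfval : iteratedDerivWithin m f s ξ = (m.factorial : ℝ) * p.coeff m := by
    rw [hsplit, hiter, hevalξ]
  have hcoeff_nonneg : 0 ≤ p.coeff m := by
    have h0 := hderiv ξ hξs
    rw [hfval] at h0
    have hfac : (0 : ℝ) < m.factorial := by exact_mod_cast m.factorial_pos
    nlinarith
  -- identify the coefficient with the divided difference
  have hbasis_coeff : ∀ j : Fin (m + 1),
      (Lagrange.basis Finset.univ x j).coeff m =
        ∏ k ∈ Finset.univ.erase j, (x j - x k)⁻¹ := by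
    intro j
    have hnd : (Lagrange.basis Finset.univ x j).natDegree = m := by
      rw [Lagrange.natDegree_basis hvs (Finset.mem_univ j)]
      simp
    have hlc : (Lagrange.basis Finset.univ x j).coeff m =
        (Lagrange.basis Finset.univ x j).leadingCoeff := by
      rw [Polynomial.leadingCoeff, hnd]
    rw [hlc]
    unfold Lagrange.basis
    rw [Polynomial.leadingCoeff_prod]
    apply Finset.prod_congr rfl
    intro k hk
    have hne : x j ≠ x k := fun h => (Finset.mem_erase.mp hk).1 (hinj h).symm
    unfold Lagrange.basisDivisor
    rw [Polynomial.leadingCoeff, Polynomial.natDegree_C_mul, Polynomial.natDegree_X_sub_C]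
    · simp [Polynomial.coeff_C, sub_eq_zero]
    · exact inv_ne_zero (sub_ne_zero.mpr hne)
  have hcoeff : p.coeff m = ∑ j, f (x j) / ∏ k ∈ Finset.univ.erase j, (x j - x k) := by
    rw [hp, Lagrange.interpolate_apply, Polynomial.finset_sum_coeff]
    apply Finset.sum_congr rfl
    intro j _
    rw [Polynomial.coeff_C_mul, hbasis_coeff j, div_eq_mul_inv, Finset.prod_inv_distrib]
  rw [← hcoeff]
  exact hcoeff_nonneg
end

section
/- Let n ≥ 2 and let f : ℝ → ℝ be a function on an open interval (α, β) such that for all distinct x_1, …, x_n in (α, β) the divided difference ∑_{j=1}^n f(x_j)/∏_{k≠j}(x_j − x_k) is nonnegative. If f is (n−1) times continuously differentiable on (α, β), then the (n−1)-th derivative of f is nonnegative on (α, β). -/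
open Set Finset

lemma my_iterDW_open {n : ℕ} {f : ℝ → ℝ} {s : Set ℝ} {x : ℝ} (hs : IsOpen s) (hx : x ∈ s) :
    iteratedDerivWithin n f s x = iteratedDeriv n f x := by
  simp only [iteratedDerivWithin, iteratedDeriv, iteratedFDerivWithin_of_isOpen n hs hx]

lemma my_iterD_sub {m : ℕ} {f g : ℝ → ℝ} {x : ℝ} (hf : ContDiffAt ℝ m f x)
    (hg : ContDiffAt ℝ m g x) :
    iteratedDeriv m (fun y => f y - g y) x = iteratedDeriv m f x - iteratedDeriv m g x := by
  obtain ⟨u, hu, hfu⟩ := hf.contDiffOn le_rfl (by simp)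
  obtain ⟨v, hv, hgv⟩ := hg.contDiffOn le_rfl (by simp)
  obtain ⟨w, hw, hwo, hxw⟩ := mem_nhds_iff.mp (Filter.inter_mem hu hv)
  have hfw : ContDiffOn ℝ m f w := hfu.mono (fun y hy => (hw hy).1)
  have hgw : ContDiffOn ℝ m g w := hgv.mono (fun y hy => (hw hy).2)
  have h1 : iteratedDerivWithin m (f - g) w x
      = iteratedDerivWithin m f w x - iteratedDerivWithin m g w x :=
    iteratedDerivWithin_sub hxw hwo.uniqueDiffOn (hfw x hxw) (hgw x hxw)
  have h2 : iteratedDerivWithin m (f - g) w x = iteratedDeriv m (f - g) x :=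
    my_iterDW_open hwo hxw
  have h3 : (fun y => f y - g y) = f - g := rfl
  rw [h3, ← h2, h1, my_iterDW_open hwo hxw, my_iterDW_open hwo hxw]

lemma my_diffAt_iter {m : ℕ} {f : ℝ → ℝ} {y : ℝ} (h : ContDiffAt ℝ (m + 1 : ℕ) f y) :
    DifferentiableAt ℝ (iteratedDeriv m f) y := by
  obtain ⟨u, hu, hfu⟩ := h.contDiffOn le_rfl (by simp)
  obtain ⟨w, hw, hwo, hyw⟩ := mem_nhds_iff.mp hu
  have hfw : ContDiffOn ℝ (m + 1 : ℕ) f w := hfu.mono hw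
  have hdw : DifferentiableOn ℝ (iteratedDerivWithin m f w) w :=
    hfw.differentiableOn_iteratedDerivWithin (by exact_mod_cast Nat.lt_succ_self m)
      hwo.uniqueDiffOn
  have : DifferentiableAt ℝ (iteratedDerivWithin m f w) y :=
    (hdw y hyw).differentiableAt (hwo.mem_nhds hyw)
  refine this.congr_of_eventuallyEq ?_
  filter_upwards [hwo.mem_nhds hyw] with z hz
  exact (my_iterDW_open hwo hz).symm

lemma my_contAt_iter {m : ℕ} {f : ℝ → ℝ} {y : ℝ} (h : ContDiffAt ℝ (m : ℕ) f y) :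
    ContinuousAt (iteratedDeriv m f) y := by
  obtain ⟨u, hu, hfu⟩ := h.contDiffOn le_rfl (by simp)
  obtain ⟨w, hw, hwo, hyw⟩ := mem_nhds_iff.mp hu
  have hfw : ContDiffOn ℝ (m : ℕ) f w := hfu.mono hw
  have hc : ContinuousOn (iteratedDerivWithin m f w) w :=
    hfw.continuousOn_iteratedDerivWithin le_rfl hwo.uniqueDiffOn
  have : ContinuousAt (iteratedDerivWithin m f w) y := hc.continuousAt (hwo.mem_nhds hyw)
  refine this.congr ?_
  filter_upwards [hwo.mem_nhds hyw] with z hz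
  exact (my_iterDW_open hwo hz)

lemma my_key (m : ℕ) : ∀ (f : ℝ → ℝ) (a b t h : ℝ), 0 < h → a < t → t + m * h < b →
    (∀ x ∈ Set.Ioo a b, ContDiffAt ℝ (m : ℕ) f x) →
    (∀ x ∈ Set.Ioo a b, iteratedDeriv m f x < 0) →
    (fwdDiff h)^[m] f t < 0 := by
  induction m with
  | zero =>
    intro f a b t h hh hat htb _ hneg
    simpa using hneg t ⟨hat, by simpa using htb⟩
  | succ m IH =>
    intro f a b t h hh hat htb hcd hneg
    rw [Function.iterate_succ_apply]
    have hmem : ∀ x ∈ Set.Ioo a (b - h), x ∈ Set.Ioo a b ∧ x + h ∈ Set.Ioo a b := by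
      rintro x ⟨hx1, hx2⟩
      exact ⟨⟨hx1, by linarith⟩, ⟨by linarith, by linarith⟩⟩
    refine IH (fwdDiff h f) a (b - h) t h hh hat (by push_cast at htb ⊢; linarith) ?_ ?_
    · intro x hx
      obtain ⟨hx1, hx2⟩ := hmem x hx
      have h1 : ContDiffAt ℝ (m : ℕ) (fun y => f (y + h)) x := by
        have := (hcd _ hx2).of_le (Nat.cast_le.mpr (Nat.le_succ m))
        exact this.comp x (contDiffAt_id.add contDiffAt_const)
      have h2 : ContDiffAt ℝ (m : ℕ) f x := (hcd _ hx1).of_le (Nat.cast_le.mpr (Nat.le_succ m))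
      exact h1.sub h2
    · intro x hx
      obtain ⟨hx1, hx2⟩ := hmem x hx
      have hIcc : Set.Icc x (x + h) ⊆ Set.Ioo a b := by
        intro y ⟨hy1, hy2⟩
        exact ⟨by linarith [hx1.1], by linarith [hx2.2]⟩
      have heq : iteratedDeriv m (fwdDiff h f) x
          = iteratedDeriv m f (x + h) - iteratedDeriv m f x := by
        have h1 : ContDiffAt ℝ (m : ℕ) (fun y => f (y + h)) x := by
          have := (hcd _ hx2).of_le (Nat.cast_le.mpr (Nat.le_succ m))
          exact this.comp x (contDiffAt_id.add contDiffAt_const)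
        have h2 : ContDiffAt ℝ (m : ℕ) f x := (hcd _ hx1).of_le (Nat.cast_le.mpr (Nat.le_succ m))
        have : iteratedDeriv m (fwdDiff h f) x
            = iteratedDeriv m (fun y => f (y + h)) x - iteratedDeriv m f x :=
          my_iterD_sub h1 h2
        rw [this, iteratedDeriv_comp_add_const]
      rw [heq]
      have hd : ∀ y ∈ Set.Icc x (x + h), DifferentiableAt ℝ (iteratedDeriv m f) y :=
        fun y hy => my_diffAt_iter (hcd y (hIcc hy))
      have hxxh : x < x + h := by linarith
      obtain ⟨c, hc, hc'⟩ := exists_deriv_eq_slope (iteratedDeriv m f) hxxh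
        (fun y hy => (hd y hy).continuousAt.continuousWithinAt)
        (fun y hy => (hd y (Set.Ioo_subset_Icc_self hy)).differentiableWithinAt)
      have hcmem : c ∈ Set.Ioo a b := hIcc (Set.Ioo_subset_Icc_self hc)
      have hder : deriv (iteratedDeriv m f) c = iteratedDeriv (m + 1) f c := by
        rw [iteratedDeriv_succ]
      have hneg' := hneg c hcmem
      rw [hder] at hc'
      have hslope : (iteratedDeriv m f (x + h) - iteratedDeriv m f x) / (x + h - x) < 0 := by
        rw [← hc']; exact hneg'
      have hden : (0:ℝ) < x + h - x := by linarith
      calc iteratedDeriv m f (x + h) - iteratedDeriv m f x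
      _ = ((iteratedDeriv m f (x + h) - iteratedDeriv m f x) / (x + h - x)) * (x + h - x) := by
        field_simp
      _ < 0 := mul_neg_of_neg_of_pos hslope hden

lemma my_prod_fact (j : ℕ) : ∏ k ∈ Finset.range j, ((j:ℝ) - k) = (Nat.factorial j : ℝ) := by
  have h := Finset.prod_range_reflect (fun k => ((j:ℝ) - k)) j
  rw [← h]
  have : ∀ i ∈ Finset.range j, ((j:ℝ) - ((j - 1 - i : ℕ) : ℝ)) = ((i:ℝ) + 1) := by
    intro i hi
    have hij : i < j := Finset.mem_range.mp hi
    have h1 : j - 1 - i = j - (i + 1) := by omega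
    rw [h1, Nat.cast_sub (by omega)]
    push_cast
    ring
  rw [Finset.prod_congr rfl this]
  rw [← Finset.prod_range_add_one_eq_factorial j]
  push_cast
  rfl

lemma my_prod_neg (m jv : ℕ) (hj : jv ≤ m) :
    ∏ k ∈ Finset.Ico (jv+1) (m+1), ((jv:ℝ) - k)
      = (-1)^(m-jv) * (Nat.factorial (m-jv) : ℝ) := by
  rw [Finset.prod_Ico_eq_prod_range]
  have h1 : m + 1 - (jv + 1) = m - jv := by omega
  rw [h1]
  have : ∀ i ∈ Finset.range (m - jv), ((jv:ℝ) - ((jv + 1 + i : ℕ):ℝ)) = (-1) * ((i:ℝ) + 1) := by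
    intro i _
    push_cast
    ring
  rw [Finset.prod_congr rfl this, Finset.prod_mul_distrib, Finset.prod_const]
  congr 1
  · simp
  · rw [← Finset.prod_range_add_one_eq_factorial (m - jv)]
    push_cast
    rfl

lemma my_prod_main (m jv : ℕ) (hj : jv ≤ m) :
    ∏ k ∈ (Finset.range (m+1)).erase jv, ((jv:ℝ) - k)
      = (-1)^(m-jv) * (Nat.factorial jv : ℝ) * (Nat.factorial (m-jv) : ℝ) := by
  have hset : (Finset.range (m+1)).erase jv
      = Finset.range jv ∪ Finset.Ico (jv+1) (m+1) := by
    ext k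
    simp only [Finset.mem_erase, Finset.mem_range, Finset.mem_union, Finset.mem_Ico]
    omega
  have hdisj : Disjoint (Finset.range jv) (Finset.Ico (jv+1) (m+1)) := by
    simp only [Finset.disjoint_left, Finset.mem_range, Finset.mem_Ico]
    omega
  rw [hset, Finset.prod_union hdisj, my_prod_fact, my_prod_neg m jv hj]
  ring

lemma my_prod_erase_eq (m : ℕ) (j : Fin (m+1)) :
    ∏ k ∈ Finset.univ.erase j, (((j:ℕ):ℝ) - ((k:ℕ):ℝ))
      = (-1)^(m-(j:ℕ)) * (Nat.factorial (j:ℕ) : ℝ) * (Nat.factorial (m-(j:ℕ)) : ℝ) := by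
  set jv := (j:ℕ) with hjv
  set g : ℕ → ℝ := fun k => if k = jv then 1 else ((jv:ℝ) - k) with hg
  have step1 : ∏ k ∈ Finset.univ.erase j, (((jv):ℝ) - ((k:ℕ):ℝ))
      = ∏ k ∈ (Finset.univ.erase j : Finset (Fin (m+1))), g (k:ℕ) := by
    refine Finset.prod_congr rfl ?_
    intro k hk
    have hkj : k ≠ j := (Finset.mem_erase.mp hk).1
    have : (k:ℕ) ≠ jv := fun hc => hkj (Fin.ext hc)
    simp [hg, this]
  have step2 : ∏ k ∈ (Finset.univ.erase j : Finset (Fin (m+1))), g (k:ℕ)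
      = ∏ k : Fin (m+1), g (k:ℕ) := by
    apply Finset.prod_erase
    simp [hg, hjv]
  have step3 : ∏ k : Fin (m+1), g (k:ℕ) = ∏ k ∈ Finset.range (m+1), g k :=
    Fin.prod_univ_eq_prod_range (fun k => g k) (m+1)
  have step4 : ∏ k ∈ Finset.range (m+1), g k
      = ∏ k ∈ (Finset.range (m+1)).erase jv, g k := by
    symm; apply Finset.prod_erase; simp [hg]
  have step5 : ∏ k ∈ (Finset.range (m+1)).erase jv, g k
      = ∏ k ∈ (Finset.range (m+1)).erase jv, ((jv:ℝ) - k) := by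
    refine Finset.prod_congr rfl ?_
    intro k hk
    have : k ≠ jv := (Finset.mem_erase.mp hk).1
    simp [hg, this]
  rw [step1, step2, step3, step4, step5, my_prod_main m jv (by omega)]

lemma my_denom (m : ℕ) (j : Fin (m+1)) (h t : ℝ) :
    ∏ k ∈ Finset.univ.erase j, ((t + (j:ℕ)*h) - (t + (k:ℕ)*h))
      = (-1)^(m-(j:ℕ)) * (Nat.factorial (j:ℕ) : ℝ) * (Nat.factorial (m-(j:ℕ)) : ℝ) * h^m := by
  have h1 : ∀ k : Fin (m+1), (t + (j:ℕ)*h) - (t + (k:ℕ)*h) = (((j:ℕ):ℝ) - ((k:ℕ):ℝ)) * h := by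
    intro k; ring
  rw [Finset.prod_congr rfl (fun k _ => h1 k), Finset.prod_mul_distrib, Finset.prod_const,
    Finset.card_erase_of_mem (Finset.mem_univ j), Finset.card_univ, Fintype.card_fin,
    Nat.add_sub_cancel, my_prod_erase_eq]

lemma my_term (m jv : ℕ) (hjm : jv ≤ m) (h F : ℝ) (hh : 0 < h) :
    (Nat.factorial m : ℝ) * h^m * (F / ((-1)^(m-jv) * (Nat.factorial jv : ℝ) *
        (Nat.factorial (m-jv) : ℝ) * h^m))
      = (-1:ℝ)^(m-jv) * (m.choose jv) * F := by
  have hfact : (m.choose jv) * Nat.factorial jv * Nat.factorial (m-jv) = Nat.factorial m :=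
    Nat.choose_mul_factorial_mul_factorial hjm
  have hfR : ((m.choose jv : ℝ)) * (Nat.factorial jv : ℝ) * (Nat.factorial (m-jv) : ℝ)
      = (Nat.factorial m : ℝ) := by exact_mod_cast hfact
  have hsq : ((-1:ℝ))^(m-jv) * ((-1:ℝ))^(m-jv) = 1 := by
    rw [← pow_add, ← two_mul, pow_mul]; norm_num
  have h1 : (Nat.factorial jv : ℝ) ≠ 0 := by positivity
  have h2 : (Nat.factorial (m-jv) : ℝ) ≠ 0 := by positivity
  have h3 : h^m ≠ 0 := by positivity
  have h4 : ((-1:ℝ))^(m-jv) ≠ 0 := by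
    intro hc; rw [hc] at hsq; simp at hsq
  rw [← hfR]
  rcases neg_one_pow_eq_or ℝ (m-jv) with hc | hc <;> rw [hc] <;> field_simp <;> ring

theorem deriv_nonneg_of_divided_difference_nonneg (n : ℕ) (hn : 2 ≤ n) (α β : ℝ)
    (f : ℝ → ℝ)
    (hdd : ∀ x : Fin n → ℝ, (∀ j, x j ∈ Set.Ioo α β) → Function.Injective x →
      0 ≤ ∑ j, f (x j) / ∏ k ∈ Finset.univ.erase j, (x j - x k))
    (hf : ContDiffOn ℝ (n - 1 : ℕ) f (Set.Ioo α β)) :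
    ∀ t ∈ Set.Ioo α β, 0 ≤ iteratedDerivWithin (n - 1) f (Set.Ioo α β) t := by
  intro t ht
  by_contra hlt
  push_neg at hlt
  obtain ⟨m, rfl⟩ : ∃ m, n = m + 1 := ⟨n - 1, by omega⟩
  have hmn : m + 1 - 1 = m := rfl
  rw [hmn] at hlt hf
  set s := Set.Ioo α β with hs
  have hso : IsOpen s := isOpen_Ioo
  have hcd : ∀ x ∈ s, ContDiffAt ℝ (m : ℕ) f x := fun x hx => hf.contDiffAt (hso.mem_nhds hx)
  have hneg_t : iteratedDeriv m f t < 0 := by rw [← my_iterDW_open hso ht]; exact hlt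
  have hcont := my_contAt_iter (hcd t ht)
  have hnb : {x | iteratedDeriv m f x < 0} ∈ nhds t := by
    have := hcont.preimage_mem_nhds (Iio_mem_nhds hneg_t)
    simpa [Set.preimage] using this
  obtain ⟨ε, hε, hball⟩ := Metric.mem_nhds_iff.mp (Filter.inter_mem hnb (hso.mem_nhds ht))
  rw [Real.ball_eq_Ioo] at hball
  set h := ε / (m + 1) with hh
  have hhpos : 0 < h := by positivity
  have hmh : h * (m + 1) = ε := by rw [hh, div_mul_cancel₀]; positivity
  have hth : t + m * h < t + ε := by nlinarith
  have hkey := my_key m f (t - ε) (t + ε) t h hhpos (by linarith) (by linarith)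
      (fun x hx => hcd x (hball hx).2)
      (fun x hx => (hball hx).1)
  set x : Fin (m+1) → ℝ := fun j => t + (j:ℕ) * h with hx
  have hmemx : ∀ j, x j ∈ s := by
    intro j
    have hj : (j:ℕ) ≤ m := by omega
    have h1 : ((j:ℕ):ℝ) * h ≤ m * h := by
      apply mul_le_mul_of_nonneg_right _ hhpos.le
      exact_mod_cast hj
    have h2 : (0:ℝ) ≤ ((j:ℕ):ℝ) * h := by positivity
    apply (hball _).2
    constructor <;> simp only [hx] <;> nlinarith
  have hinj : Function.Injective x := by
    intro a b hab
    simp only [hx] at hab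
    have : ((a:ℕ):ℝ) = ((b:ℕ):ℝ) := by
      exact mul_right_cancel₀ hhpos.ne' (add_left_cancel hab)
    exact Fin.ext (by exact_mod_cast this)
  have hS := hdd x hmemx hinj
  -- Δ = m! h^m * S
  have hDelta : (fwdDiff h)^[m] f t
      = (Nat.factorial m : ℝ) * h^m * ∑ j, f (x j) / ∏ k ∈ Finset.univ.erase j, (x j - x k) := by
    rw [Finset.mul_sum]
    have hterm : ∀ j : Fin (m+1),
        (Nat.factorial m : ℝ) * h^m * (f (x j) / ∏ k ∈ Finset.univ.erase j, (x j - x k))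
          = (-1:ℝ)^(m-(j:ℕ)) * (m.choose (j:ℕ)) * f (t + (j:ℕ) * h) := by
      intro j
      rw [show (∏ k ∈ Finset.univ.erase j, (x j - x k))
          = (-1)^(m-(j:ℕ)) * (Nat.factorial (j:ℕ) : ℝ) * (Nat.factorial (m-(j:ℕ)) : ℝ) * h^m
        from my_denom m j h t]
      exact my_term m (j:ℕ) (by omega) h (f (t + (j:ℕ)*h)) hhpos
    rw [Finset.sum_congr rfl (fun j _ => hterm j)]
    rw [fwdDiff_iter_eq_sum_shift]
    rw [← Fin.sum_univ_eq_sum_range (fun k => ((-1:ℤ)^(m-k) * (m.choose k : ℤ)) • f (t + k • h)) (m+1)]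
    refine Finset.sum_congr rfl ?_
    intro j _
    push_cast [zsmul_eq_mul, nsmul_eq_mul]
    ring
  have hpos : (0:ℝ) < (Nat.factorial m : ℝ) * h^m := by positivity
  have : (0:ℝ) ≤ (fwdDiff h)^[m] f t := by
    rw [hDelta]
    exact mul_nonneg hpos.le hS
  linarith
end

section
/- Let q be a nonnegative integer and n ≥ 2, and let f(t) = t^{q+n−1}. Then for any distinct reals x_1, …, x_n, the divided difference ∑_{j=1}^n x_j^{q+n−1}/∏_{k≠j}(x_j − x_k) equals the complete homogeneous symmetric polynomial h_q(x_1, …, x_n) = ∑_{1 ≤ j_1 ≤ ⋯ ≤ j_q ≤ n} x_{j_1}⋯x_{j_q}. -/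
open Finset Polynomial

namespace DDaux

variable {n : ℕ} (x : Fin n → ℝ)

noncomputable def E (s : Finset (Fin n)) (b : ℕ) : ℝ :=
  ∑ t ∈ s.powersetCard b, ∏ i ∈ t, x i

noncomputable def H (s : Finset (Fin n)) (c : ℕ) : ℝ :=
  ∑ m ∈ s.sym c, ((m : Multiset (Fin n)).map x).prod

lemma E_zero (s : Finset (Fin n)) : E x s 0 = 1 := by simp [E]

lemma E_eq_zero {s : Finset (Fin n)} {b : ℕ} (h : s.card < b) : E x s b = 0 := by
  simp [E, Finset.powersetCard_eq_empty.2 h]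

lemma H_zero (s : Finset (Fin n)) : H x s 0 = 1 := by
  simp only [H, Finset.sym_zero, Finset.sum_singleton]
  rfl

lemma H_empty {c : ℕ} (h : 1 ≤ c) : H x (∅ : Finset (Fin n)) c = 0 := by
  obtain ⟨c, rfl⟩ : ∃ d, c = d + 1 := ⟨c - 1, by omega⟩
  simp [H, Finset.sym_empty]

lemma E_insert {a : Fin n} {s : Finset (Fin n)} (h : a ∉ s) (b : ℕ) :
    E x (insert a s) (b + 1) = E x s (b + 1) + x a * E x s b := by
  have hdisj : Disjoint (s.powersetCard (b + 1)) ((s.powersetCard b).image (insert a)) := by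
    rw [Finset.disjoint_right]
    rintro t ht hts
    simp only [Finset.mem_image] at ht
    obtain ⟨u, hu, rfl⟩ := ht
    exact h ((Finset.mem_powersetCard.1 hts).1 (Finset.mem_insert_self a u))
  have hinj : ∀ t ∈ s.powersetCard b, ∀ u ∈ s.powersetCard b,
      insert a t = insert a u → t = u := by
    intro t ht u hu htu
    have hat : a ∉ t := fun hat => h ((Finset.mem_powersetCard.1 ht).1 hat)
    have hau : a ∉ u := fun hau => h ((Finset.mem_powersetCard.1 hu).1 hau)
    rw [← Finset.erase_insert hat, ← Finset.erase_insert hau, htu]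
  rw [E, Finset.powersetCard_succ_insert h, Finset.sum_union hdisj, Finset.sum_image hinj]
  rw [E, E, Finset.mul_sum]
  congr 1
  refine Finset.sum_congr rfl fun t ht => ?_
  rw [Finset.prod_insert fun hat => h ((Finset.mem_powersetCard.1 ht).1 hat)]

lemma H_insert {a : Fin n} {s : Finset (Fin n)} (h : a ∉ s) (c : ℕ) :
    H x (insert a s) (c + 1) = H x s (c + 1) + x a * H x (insert a s) c := by
  rw [H, ← Finset.sum_filter_add_sum_filter_not ((insert a s).sym (c+1)) (fun m => a ∈ m),
    add_comm]
  congr 1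
  · -- no-a part equals H x s (c+1)
    rw [H]
    refine Finset.sum_congr ?_ (fun _ _ => rfl)
    ext m
    simp only [Finset.mem_filter, Finset.mem_sym_iff, Finset.mem_insert]
    constructor
    · rintro ⟨hm, ham⟩ b hb
      rcases hm b hb with rfl | hbs
      · exact absurd hb ham
      · exact hbs
    · intro hm
      exact ⟨fun b hb => Or.inr (hm b hb), fun ham => h (hm a ham)⟩
  · rw [H, Finset.mul_sum]
    refine Finset.sum_bij' (fun m hm => Sym.erase m a (Finset.mem_filter.1 hm).2)
      (fun m' _ => a ::ₛ m') ?_ ?_ ?_ ?_ ?_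
    · intro m hm
      rw [Finset.mem_sym_iff]
      intro b hb
      exact (Finset.mem_sym_iff.1 (Finset.mem_filter.1 hm).1) b
        (Multiset.mem_of_mem_erase (by exact hb))
    · intro m' hm'
      rw [Finset.mem_filter]
      refine ⟨Finset.mem_sym_iff.2 fun b hb => ?_, Sym.mem_cons_self a m'⟩
      rcases Sym.mem_cons.1 hb with rfl | hb
      · exact Finset.mem_insert_self _ _
      · exact Finset.mem_sym_iff.1 hm' b hb
    · intro m hm
      exact Sym.cons_erase _
    · intro m' hm'
      exact Sym.erase_cons_head m' a
    · intro m hm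
      conv_lhs => rw [← Sym.cons_erase (Finset.mem_filter.1 hm).2]
      rw [Sym.coe_cons, Multiset.map_cons, Multiset.prod_cons]


lemma wronski (r : ℕ) (hr : 1 ≤ r) (s : Finset (Fin n)) :
    ∑ b ∈ Finset.range (r + 1), (-1 : ℝ) ^ b * E x s b * H x s (r - b) = 0 := by
  induction s using Finset.induction_on with
  | empty =>
    refine Finset.sum_eq_zero fun b hb => ?_
    rcases b with _ | b
    · simp [E_zero, H_empty x hr]
    · rw [E_eq_zero x (by simp), mul_zero, zero_mul]
  | insert a s ha ih =>
    obtain ⟨t, rfl⟩ : ∃ t, r = t + 1 := ⟨r - 1, by omega⟩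
    set A := x a with hAdef
    set U := ∑ b ∈ Finset.range (t + 1),
      (-1 : ℝ) ^ b * E x s b * H x (insert a s) (t - b) with hU
    have hA : ∑ b ∈ Finset.range (t + 1 + 1),
        (-1 : ℝ) ^ b * E x (insert a s) b * H x (insert a s) (t + 1 - b)
        = (∑ b ∈ Finset.range (t + 1 + 1),
            (-1 : ℝ) ^ b * E x s b * H x (insert a s) (t + 1 - b)) - A * U := by
      rw [Finset.sum_range_succ', Finset.sum_range_succ'
        (fun b => (-1 : ℝ) ^ b * E x s b * H x (insert a s) (t + 1 - b))]
      have expand : ∀ b ∈ Finset.range (t + 1),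
          (-1 : ℝ) ^ (b + 1) * E x (insert a s) (b + 1) * H x (insert a s) (t + 1 - (b + 1))
          = (-1 : ℝ) ^ (b + 1) * E x s (b + 1) * H x (insert a s) (t + 1 - (b + 1))
            - A * ((-1 : ℝ) ^ b * E x s b * H x (insert a s) (t - b)) := by
        intro b hb
        rw [E_insert x ha, Nat.succ_sub_succ]
        ring
      rw [Finset.sum_congr rfl expand, Finset.sum_sub_distrib, ← Finset.mul_sum, hU,
        E_zero, E_zero]
      ring
    have hB : ∑ b ∈ Finset.range (t + 1 + 1),
        (-1 : ℝ) ^ b * E x s b * H x (insert a s) (t + 1 - b)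
        = (∑ b ∈ Finset.range (t + 1 + 1),
            (-1 : ℝ) ^ b * E x s b * H x s (t + 1 - b)) + A * U := by
      rw [Finset.sum_range_succ, Finset.sum_range_succ
        (fun b => (-1 : ℝ) ^ b * E x s b * H x s (t + 1 - b))]
      have expand2 : ∀ b ∈ Finset.range (t + 1),
          (-1 : ℝ) ^ b * E x s b * H x (insert a s) (t + 1 - b)
          = (-1 : ℝ) ^ b * E x s b * H x s (t + 1 - b)
            + A * ((-1 : ℝ) ^ b * E x s b * H x (insert a s) (t - b)) := by
        intro b hb
        have h1 : t + 1 - b = (t - b) + 1 := by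
          have := Finset.mem_range.1 hb; omega
        rw [h1, H_insert x ha]
        ring
      rw [Finset.sum_congr rfl expand2, Finset.sum_add_distrib, ← Finset.mul_sum, hU,
        Nat.sub_self, H_zero, H_zero]
      ring
    rw [hA, hB, ih]
    ring

lemma basis_coeff (hinj : Function.Injective x) (j : Fin n) :
    (Lagrange.basis Finset.univ x j).coeff (n - 1)
      = (∏ k ∈ Finset.univ.erase j, (x j - x k))⁻¹ := by
  rw [Lagrange.basis]
  have hbd : ∀ k ∈ Finset.univ.erase j, Lagrange.basisDivisor (x j) (x k)
      = C (x j - x k)⁻¹ * (X - C (x k)) := fun k _ => rfl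
  rw [Finset.prod_congr rfl hbd, Finset.prod_mul_distrib, ← map_prod, ← Lagrange.nodal]
  rw [Polynomial.coeff_C_mul]
  have hm : (Lagrange.nodal (Finset.univ.erase j) x).Monic := Lagrange.nodal_monic
  have hd : (Lagrange.nodal (Finset.univ.erase j) x).natDegree = n - 1 := by
    rw [Lagrange.natDegree_nodal, Finset.card_erase_of_mem (Finset.mem_univ j),
      Finset.card_univ, Fintype.card_fin]
  rw [← hd, hm.coeff_natDegree, mul_one, ← Finset.prod_inv_distrib]

lemma dd_eq_coeff (hinj : Function.Injective x) {P : ℝ[X]} (hP : P.degree < n) :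
    ∑ j, Polynomial.eval (x j) P / ∏ k ∈ Finset.univ.erase j, (x j - x k)
      = P.coeff (n - 1) := by
  have hvs : Set.InjOn x ↑(Finset.univ : Finset (Fin n)) := Function.Injective.injOn hinj
  have hP' : P.degree < (Finset.univ : Finset (Fin n)).card := by simpa using hP
  conv_rhs => rw [Lagrange.eq_interpolate hvs hP']
  rw [Lagrange.interpolate_apply, Polynomial.finset_sum_coeff]
  refine Finset.sum_congr rfl fun j _ => ?_
  rw [Polynomial.coeff_C_mul, basis_coeff x hinj j, div_eq_mul_inv]

lemma eval_vieta (j : Fin n) :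
    ∑ b ∈ Finset.range (n + 1), (-1 : ℝ) ^ b * E x Finset.univ b * x j ^ (n - b) = 0 := by
  have h0 : Polynomial.eval (x j) (Lagrange.nodal Finset.univ x) = 0 :=
    Lagrange.eval_nodal_at_node (Finset.mem_univ j)
  have hv := Multiset.prod_X_sub_X_eq_sum_esymm (Finset.univ.val.map x)
  have hcard : Multiset.card (Finset.univ.val.map x) = n := by simp
  have hnodal : Lagrange.nodal (Finset.univ : Finset (Fin n)) x
      = ((Finset.univ.val.map x).map fun t => X - C t).prod := by
    rw [Lagrange.nodal, Finset.prod_eq_multiset_prod, Multiset.map_map]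
    rfl
  rw [hnodal, hv, hcard, Polynomial.eval_finset_sum] at h0
  refine Eq.trans (Finset.sum_congr rfl fun b hb => ?_) h0
  rw [Finset.esymm_map_val]
  simp only [Polynomial.eval_mul, Polynomial.eval_pow, Polynomial.eval_neg,
    Polynomial.eval_one, Polynomial.eval_C, Polynomial.eval_X]
  rw [E, mul_assoc]

lemma pow_rec {m : ℕ} (hm : n ≤ m) (j : Fin n) :
    x j ^ m = ∑ b ∈ Finset.range n, (-1 : ℝ) ^ b * E x Finset.univ (b + 1) * x j ^ (m - (b + 1)) := by
  have h2 : ∑ b ∈ Finset.range (n + 1), (-1 : ℝ) ^ b * E x Finset.univ b * x j ^ (m - b) = 0 := by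
    calc ∑ b ∈ Finset.range (n + 1), (-1 : ℝ) ^ b * E x Finset.univ b * x j ^ (m - b)
        = (∑ b ∈ Finset.range (n + 1), (-1 : ℝ) ^ b * E x Finset.univ b * x j ^ (n - b))
            * x j ^ (m - n) := by
          rw [Finset.sum_mul]
          refine Finset.sum_congr rfl fun b hb => ?_
          have hb' : b ≤ n := by have := Finset.mem_range.1 hb; omega
          have hpow : x j ^ (n - b) * x j ^ (m - n) = x j ^ (m - b) := by
            rw [← pow_add]; congr 1; omega
          rw [mul_assoc ((-1 : ℝ) ^ b * E x Finset.univ b), hpow]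
      _ = 0 := by rw [eval_vieta, zero_mul]
  rw [Finset.sum_range_succ'] at h2
  simp only [E_zero, pow_zero, one_mul, Nat.sub_zero] at h2
  have hS : ∑ b ∈ Finset.range n, (-1 : ℝ) ^ (b + 1) * E x Finset.univ (b + 1) * x j ^ (m - (b + 1))
      = -∑ b ∈ Finset.range n, (-1 : ℝ) ^ b * E x Finset.univ (b + 1) * x j ^ (m - (b + 1)) := by
    rw [← Finset.sum_neg_distrib]
    exact Finset.sum_congr rfl fun b _ => by ring
  rw [hS] at h2
  linarith

noncomputable def D (m : ℕ) : ℝ :=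
  ∑ j, x j ^ m / ∏ k ∈ Finset.univ.erase j, (x j - x k)

lemma D_lt (hinj : Function.Injective x) {m : ℕ} (hm : m < n) :
    D x m = if m = n - 1 then 1 else 0 := by
  have hdeg : (X ^ m : ℝ[X]).degree < n := by
    rw [Polynomial.degree_X_pow]
    exact_mod_cast hm
  have h := dd_eq_coeff x hinj hdeg
  simp only [Polynomial.eval_pow, Polynomial.eval_X] at h
  rw [D, h, Polynomial.coeff_X_pow]
  simp [eq_comm]

lemma D_rec {m : ℕ} (hm : n ≤ m) :
    D x m = ∑ b ∈ Finset.range n, (-1 : ℝ) ^ b * E x Finset.univ (b + 1) * D x (m - (b + 1)) := by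
  rw [D]
  calc ∑ j, x j ^ m / ∏ k ∈ Finset.univ.erase j, (x j - x k)
      = ∑ j, ∑ b ∈ Finset.range n, (-1 : ℝ) ^ b * E x Finset.univ (b + 1)
          * (x j ^ (m - (b + 1)) / ∏ k ∈ Finset.univ.erase j, (x j - x k)) := by
        refine Finset.sum_congr rfl fun j _ => ?_
        rw [pow_rec x hm j, Finset.sum_div]
        exact Finset.sum_congr rfl fun b _ => by rw [mul_div_assoc]
    _ = _ := by
        rw [Finset.sum_comm]
        refine Finset.sum_congr rfl fun b _ => ?_
        rw [D, ← Finset.mul_sum]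

lemma D_eq_H (hn : 1 ≤ n) (hinj : Function.Injective x) (m : ℕ) :
    D x m = if n - 1 ≤ m then H x Finset.univ (m - (n - 1)) else 0 := by
  induction m using Nat.strong_induction_on with
  | _ m ih =>
    rcases lt_or_ge m n with hmn | hmn
    · rw [D_lt x hinj hmn]
      rcases eq_or_ne m (n - 1) with rfl | hne
      · rw [if_pos rfl, if_pos le_rfl, Nat.sub_self, H_zero]
      · rw [if_neg hne, if_neg (by omega)]
    · rw [D_rec x hmn, if_pos (by omega)]
      set r := m - (n - 1) with hrdef
      have hr1 : 1 ≤ r := by omega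
      have step1 : ∑ b ∈ Finset.range n,
          (-1 : ℝ) ^ b * E x Finset.univ (b + 1) * D x (m - (b + 1))
          = ∑ b ∈ Finset.range n, (if b + 1 ≤ r then
              (-1 : ℝ) ^ b * E x Finset.univ (b + 1) * H x Finset.univ (r - (b + 1)) else 0) := by
        refine Finset.sum_congr rfl fun b hb => ?_
        have hbn : b < n := Finset.mem_range.1 hb
        rw [ih (m - (b + 1)) (by omega)]
        by_cases hc : b + 1 ≤ r
        · rw [if_pos (by omega), if_pos hc]
          congr 2
          omega
        · rw [if_neg (by omega), if_neg hc, mul_zero]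
      rw [step1]
      have step2 : ∑ b ∈ Finset.range n, (if b + 1 ≤ r then
            (-1 : ℝ) ^ b * E x Finset.univ (b + 1) * H x Finset.univ (r - (b + 1)) else 0)
          = ∑ b ∈ Finset.range r, (-1 : ℝ) ^ b * E x Finset.univ (b + 1)
              * H x Finset.univ (r - (b + 1)) := by
        have e2 : ∑ b ∈ Finset.range n, (if b + 1 ≤ r then
              (-1 : ℝ) ^ b * E x Finset.univ (b + 1) * H x Finset.univ (r - (b + 1)) else 0)
            = ∑ b ∈ Finset.range (max n r), (if b + 1 ≤ r then
              (-1 : ℝ) ^ b * E x Finset.univ (b + 1) * H x Finset.univ (r - (b + 1)) else 0) := by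
          refine Finset.sum_subset (Finset.range_subset_range.2 (le_max_left n r)) fun b _ hbn => ?_
          have hbn' : n ≤ b := by
            by_contra hcon
            exact hbn (Finset.mem_range.2 (by omega))
          split_ifs with hc
          · rw [E_eq_zero x (by rw [Finset.card_univ, Fintype.card_fin]; omega),
              mul_zero, zero_mul]
          · rfl
        have e3 : ∑ b ∈ Finset.range r, (-1 : ℝ) ^ b * E x Finset.univ (b + 1)
              * H x Finset.univ (r - (b + 1))
            = ∑ b ∈ Finset.range (max n r), (if b + 1 ≤ r then
              (-1 : ℝ) ^ b * E x Finset.univ (b + 1) * H x Finset.univ (r - (b + 1)) else 0) := by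
          rw [show (∑ b ∈ Finset.range r, (-1 : ℝ) ^ b * E x Finset.univ (b + 1)
                * H x Finset.univ (r - (b + 1)))
              = ∑ b ∈ Finset.range r, (if b + 1 ≤ r then (-1 : ℝ) ^ b * E x Finset.univ (b + 1)
                * H x Finset.univ (r - (b + 1)) else 0) from
            Finset.sum_congr rfl fun b hb =>
              (if_pos (by have := Finset.mem_range.1 hb; omega)).symm]
          refine Finset.sum_subset (Finset.range_subset_range.2 (le_max_right n r)) fun b _ hbr => ?_
          have hbr' : r ≤ b := by
            by_contra hcon
            exact hbr (Finset.mem_range.2 (by omega))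
          rw [if_neg (by omega)]
        rw [e2, ← e3]
      rw [step2]
      have hw := wronski x r hr1 Finset.univ
      rw [Finset.sum_range_succ'] at hw
      simp only [E_zero, pow_zero, one_mul, Nat.sub_zero] at hw
      have hS : ∑ b ∈ Finset.range r, (-1 : ℝ) ^ (b + 1) * E x Finset.univ (b + 1)
            * H x Finset.univ (r - (b + 1))
          = -∑ b ∈ Finset.range r, (-1 : ℝ) ^ b * E x Finset.univ (b + 1)
            * H x Finset.univ (r - (b + 1)) := by
        rw [← Finset.sum_neg_distrib]
        exact Finset.sum_congr rfl fun b _ => by ring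
      rw [hS] at hw
      linarith

end DDaux

/-- The complete homogeneous symmetric polynomial of degree `q` in variables `x : Fin n → ℝ`. -/
def chs (n q : ℕ) (x : Fin n → ℝ) : ℝ :=
  ∑ m ∈ (Finset.univ : Finset (Fin n)).sym q, ((m : Multiset (Fin n)).map x).prod

theorem divided_difference_monomial_eq_chs (n q : ℕ) (hn : 2 ≤ n)
    (x : Fin n → ℝ) (hinj : Function.Injective x) :
    ∑ j, x j ^ (q + n - 1) / ∏ k ∈ Finset.univ.erase j, (x j - x k) = chs n q x := by
  have h1 : (∑ j, x j ^ (q + n - 1) / ∏ k ∈ Finset.univ.erase j, (x j - x k))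
      = DDaux.D x (q + n - 1) := rfl
  have h2 : chs n q x = DDaux.H x Finset.univ q := rfl
  rw [h1, h2, DDaux.D_eq_H x (by omega) hinj, if_pos (by omega)]
  congr 1
  omega
end

section
/- For any nonnegative integer p and any real numbers x_1, …, x_n, the complete homogeneous symmetric polynomial of even degree satisfies h_{2p}(x_1, …, x_n) ≥ (x_1^2 + ⋯ + x_n^2)^p / (2^p p!). -/
open Finset

/-- complete homogeneous symmetric function of a list -/
def hh : ℕ → List ℝ → ℝ
  | 0, _ => 1
  | _+1, [] => 0
  | q+1, x::xs => hh (q+1) xs + x * hh q (x::xs)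
termination_by q xs => (xs.length, q)

@[simp] lemma hh_zero (xs : List ℝ) : hh 0 xs = 1 := by simp [hh]

@[simp] lemma hh_nil (q : ℕ) : hh (q+1) [] = 0 := by simp [hh]

lemma hh_cons (q : ℕ) (x : ℝ) (xs : List ℝ) :
    hh (q+1) (x::xs) = hh (q+1) xs + x * hh q (x::xs) := by
  rw [hh]

@[simp] lemma hh_one (xs : List ℝ) : hh 1 xs = xs.sum := by
  induction xs with
  | nil => simp
  | cons x xs ih => rw [hh_cons]; simp [ih]; ring

lemma hh_expand (q : ℕ) (x : ℝ) (xs : List ℝ) :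
    hh q (x::xs) = ∑ j ∈ range (q+1), x^j * hh (q-j) xs := by
  induction q with
  | zero => simp
  | succ q ih =>
    rw [hh_cons, ih, Finset.mul_sum, Finset.sum_range_succ' _ (q+1)]
    have h1 : ∀ j ∈ range (q+1), x^(j+1) * hh (q+1-(j+1)) xs = x * (x^j * hh (q-j) xs) := by
      intro j hj
      have h2 : q+1-(j+1) = q - j := by omega
      rw [h2]; ring
    rw [Finset.sum_congr rfl h1]
    simp [add_comm]

lemma hh_expand2 (q : ℕ) (x y : ℝ) (xs : List ℝ) :
    hh q (x::y::xs) =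
      ∑ j ∈ range (q+1), ∑ k ∈ range (q+1),
        (if j + k ≤ q then x^j * y^k * hh (q-j-k) xs else 0) := by
  rw [hh_expand]
  apply Finset.sum_congr rfl
  intro j hj
  have hjq : j ≤ q := by simpa [Nat.lt_succ_iff] using hj
  rw [hh_expand, Finset.mul_sum]
  rw [show q - j + 1 = (q-j)+1 from rfl]
  symm
  rw [← Finset.sum_subset (Finset.range_subset_range.2 (by omega : q-j+1 ≤ q+1))]
  · apply Finset.sum_congr rfl
    intro k hk
    have hkq : k ≤ q - j := by simpa [Nat.lt_succ_iff] using hk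
    rw [if_pos (by omega)]
    ring
  · intro k hk hnk
    simp only [Finset.mem_range, Nat.lt_succ_iff] at hk hnk
    rw [if_neg (by omega)]

lemma hh_swap (q : ℕ) (x y : ℝ) (xs : List ℝ) :
    hh q (x::y::xs) = hh q (y::x::xs) := by
  rw [hh_expand2, hh_expand2, Finset.sum_comm]
  apply Finset.sum_congr rfl; intro j _
  apply Finset.sum_congr rfl; intro k _
  by_cases h : j + k ≤ q
  · rw [if_pos (by omega), if_pos h]
    have : q - k - j = q - j - k := by omega
    rw [this]; ring
  · rw [if_neg (by omega), if_neg h]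

lemma lsum_add (l : List ℝ) (f g : ℝ → ℝ) :
    (l.map (fun y => f y + g y)).sum = (l.map f).sum + (l.map g).sum := by
  induction l with
  | nil => simp
  | cons x l ih => simp [ih]; ring

lemma lsum_mul (l : List ℝ) (c : ℝ) (f : ℝ → ℝ) :
    (l.map (fun y => c * f y)).sum = c * (l.map f).sum := by
  induction l with
  | nil => simp
  | cons x l ih => simp [ih]; ring

lemma lsum_congr (l : List ℝ) (f g : ℝ → ℝ) (h : ∀ y ∈ l, f y = g y) :
    (l.map f).sum = (l.map g).sum := by
  rw [List.map_congr_left h]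

lemma two_h2 (xs : List ℝ) :
    2 * hh 2 xs = xs.sum * xs.sum + (xs.map (fun y => y^2)).sum := by
  induction xs with
  | nil => simp
  | cons x xs ih =>
    rw [show (2:ℕ) = 1+1 from rfl, hh_cons, hh_one]
    simp only [List.sum_cons, List.map_cons]
    rw [show (1:ℕ)+1 = 2 from rfl] at *
    nlinarith [ih]

lemma star : ∀ (r : ℕ) (xs : List ℝ),
    ((r : ℝ)+2) * hh (r+2) xs
      = xs.sum * hh (r+1) xs + (xs.map (fun y => y^2 * hh r (y::xs))).sum
  | r, [] => by simp
  | 0, x::ys => by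
    have h := two_h2 (x::ys)
    simp only [Nat.cast_zero, zero_add, hh_zero, mul_one, hh_one, List.sum_cons,
      List.map_cons] at h ⊢
    linarith [h]
  | (r+1), x::ys => by
    have IH1 := star (r+1) ys
    have IH2 := star r (x::ys)
    have c1 := hh_cons (r+2) x ys
    have c2 := hh_cons (r+1) x ys
    have c3 := hh_cons r x (x::ys)
    -- split the big sums
    have hy : ∀ y ∈ ys, y^2 * hh (r+1) (y::x::ys)
        = y^2 * hh (r+1) (y::ys) + x * (y^2 * hh r (y::x::ys)) := by
      intro y _
      rw [hh_swap (r+1) y x ys, hh_cons r x (y::ys), hh_swap r x y ys]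
      ring
    have hsplit : (ys.map (fun y => y^2 * hh (r+1) (y::x::ys))).sum
        = (ys.map (fun y => y^2 * hh (r+1) (y::ys))).sum
          + x * (ys.map (fun y => y^2 * hh r (y::x::ys))).sum := by
      rw [lsum_congr _ _ _ hy, lsum_add, lsum_mul]
    simp only [List.map_cons, List.sum_cons, List.sum_cons] at *
    push_cast at *
    linear_combination ((r:ℝ)+3) * c1 + IH1 + x * IH2 - x^2 * c3 - ys.sum * c2 - hsplit

noncomputable def psi (N : ℕ) (xs : List ℝ) (t : ℝ) : ℝ :=
  ∑ k ∈ range (N+1), hh k xs * t^(N-k) / (Nat.factorial (N-k) : ℝ)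

lemma exchange (xs : List ℝ) (A : Finset ℕ) (F : ℝ → ℕ → ℝ) :
    (xs.map (fun y => ∑ k ∈ A, F y k)).sum = ∑ k ∈ A, (xs.map (fun y => F y k)).sum := by
  induction xs with
  | nil => simp
  | cons x l ih => simp [ih, Finset.sum_add_distrib]

lemma lsum_mul_right (l : List ℝ) (c : ℝ) (f : ℝ → ℝ) :
    (l.map (fun y => f y * c)).sum = (l.map f).sum * c := by
  induction l with
  | nil => simp
  | cons x l ih => simp [ih]; ring

lemma key (m : ℕ) (xs : List ℝ) (t : ℝ) :
    ((m:ℝ)+2) * psi (m+2) xs t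
      = (t + xs.sum) * psi (m+1) xs t
        + (xs.map (fun y => y^2 * psi m (y::xs) t)).sum := by
  have fact_ne : ∀ j : ℕ, ((Nat.factorial j : ℕ) : ℝ) ≠ 0 := by
    intro j
    exact_mod_cast Nat.cast_ne_zero.mpr (Nat.factorial_ne_zero j)
  -- rewrite the list sum using `star`
  have hR3 : (xs.map (fun y => y^2 * psi m (y::xs) t)).sum
      = ∑ k ∈ range (m+1),
          (((k:ℝ)+2) * hh (k+2) xs - xs.sum * hh (k+1) xs)
            * (t^(m-k) / (Nat.factorial (m-k) : ℝ)) := by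
    have e1 : ∀ y ∈ xs, y^2 * psi m (y::xs) t
        = ∑ k ∈ range (m+1), (y^2 * hh k (y::xs)) * (t^(m-k)/(Nat.factorial (m-k):ℝ)) := by
      intro y _
      rw [psi, Finset.mul_sum]
      apply Finset.sum_congr rfl
      intro k _
      ring
    rw [lsum_congr _ _ _ e1, exchange]
    apply Finset.sum_congr rfl
    intro k _
    rw [lsum_mul_right]
    have hs := star k xs
    have : (List.map (fun y => y ^ 2 * hh k (y :: xs)) xs).sum
        = ((k:ℝ)+2) * hh (k+2) xs - xs.sum * hh (k+1) xs := by linarith [hs]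
    rw [this]
  -- A : the `t * psi` part
  have hA : t * psi (m+1) xs t
      = ∑ k ∈ range (m+3),
          ((m+2-k : ℕ):ℝ) * hh k xs * t^(m+2-k) / (Nat.factorial (m+2-k):ℝ) := by
    rw [Finset.sum_range_succ]
    simp only [Nat.sub_self, Nat.cast_zero, zero_mul, zero_div, add_zero]
    rw [psi, Finset.mul_sum]
    apply Finset.sum_congr rfl
    intro k hk
    have hk' : k ≤ m+1 := by simpa [Nat.lt_succ_iff] using hk
    have h1 : m+2-k = (m+1-k)+1 := by omega
    rw [h1]
    generalize m+1-k = j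
    rw [pow_succ, Nat.factorial_succ]
    have hj := fact_ne j
    push_cast
    field_simp
  -- B : the rest
  have hB : ∑ k ∈ range (m+3), (k:ℝ) * hh k xs * t^(m+2-k) / (Nat.factorial (m+2-k):ℝ)
      = xs.sum * psi (m+1) xs t
        + ∑ k ∈ range (m+1),
            (((k:ℝ)+2) * hh (k+2) xs - xs.sum * hh (k+1) xs)
              * (t^(m-k) / (Nat.factorial (m-k) : ℝ)) := by
    rw [Finset.sum_range_succ' _ (m+2), Finset.sum_range_succ' _ (m+1)]
    rw [psi, Finset.mul_sum, Finset.sum_range_succ' _ (m+1)]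
    have hbd : ((0:ℕ):ℝ) * hh 0 xs * t ^ (m + 2 - 0) / (Nat.factorial (m+2-0) : ℝ) = 0 := by
      simp
    have e0 : ((0+1 : ℕ):ℝ) * hh (0+1) xs * t^(m+2-(0+1))/(Nat.factorial (m+2-(0+1)):ℝ)
        = xs.sum * (hh 0 xs * t ^ (m + 1 - 0) / (Nat.factorial (m+1-0) : ℝ)) := by
      simp only [hh_one, hh_zero]
      norm_num
      ring
    have hterm : ∀ k ∈ range (m+1),
        ((k+1+1 : ℕ):ℝ) * hh (k+1+1) xs * t^(m+2-(k+1+1))/(Nat.factorial (m+2-(k+1+1)):ℝ)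
        = xs.sum * (hh (k+1) xs * t^(m+1-(k+1))/(Nat.factorial (m+1-(k+1)):ℝ))
          + (((k:ℝ)+2) * hh (k+2) xs - xs.sum * hh (k+1) xs)
              * (t^(m-k) / (Nat.factorial (m-k) : ℝ)) := by
      intro k hk
      have h2 : m+2-(k+1+1) = m-k := by omega
      have h3 : m+1-(k+1) = m-k := by omega
      rw [h2, h3]
      push_cast
      ring
    rw [Finset.sum_congr rfl hterm, Finset.sum_add_distrib, hbd, e0]
    ring
  -- assemble
  have hL : ((m:ℝ)+2) * psi (m+2) xs t
      = (∑ k ∈ range (m+3),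
          ((m+2-k : ℕ):ℝ) * hh k xs * t^(m+2-k) / (Nat.factorial (m+2-k):ℝ))
        + ∑ k ∈ range (m+3), (k:ℝ) * hh k xs * t^(m+2-k) / (Nat.factorial (m+2-k):ℝ) := by
    rw [psi, Finset.mul_sum, ← Finset.sum_add_distrib]
    apply Finset.sum_congr rfl
    intro k hk
    have hk' : k ≤ m+2 := by simpa [Nat.lt_succ_iff] using hk
    have : ((m+2-k : ℕ):ℝ) = ((m:ℝ)+2) - (k:ℝ) := by
      push_cast [Nat.cast_sub (by omega : k ≤ m+2)]
      ring
    rw [this]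
    ring
  rw [hR3]
  linear_combination hL - hA + hB

lemma psi_at_zero (N : ℕ) (xs : List ℝ) : psi N xs 0 = hh N xs := by
  rw [psi, Finset.sum_eq_single N]
  · simp
  · intro k hk hkN
    have : N - k ≠ 0 := by
      simp only [Finset.mem_range, Nat.lt_succ_iff] at hk
      omega
    rw [zero_pow this]
    simp
  · intro h
    exact absurd (Finset.self_mem_range_succ N) h

lemma hasDerivAt_psi (N : ℕ) (xs : List ℝ) (t : ℝ) :
    HasDerivAt (fun u => psi (N+1) xs u) (psi N xs t) t := by
  have h : ∀ k ∈ range (N+2),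
      HasDerivAt (fun u : ℝ => hh k xs * u^(N+1-k) / (Nat.factorial (N+1-k):ℝ))
        (if k ≤ N then hh k xs * t^(N-k)/(Nat.factorial (N-k):ℝ) else 0) t := by
    intro k hk
    by_cases hkN : k ≤ N
    · rw [if_pos hkN]
      have h1 : N+1-k = (N-k)+1 := by omega
      rw [h1]
      generalize N-k = j
      have hD := ((hasDerivAt_pow (j+1) t).const_mul (hh k xs)).div_const
        ((Nat.factorial (j+1) : ℝ))
      refine hD.congr_deriv ?_
      have hj : ((Nat.factorial j : ℕ) : ℝ) ≠ 0 :=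
        Nat.cast_ne_zero.mpr (Nat.factorial_ne_zero j)
      rw [Nat.factorial_succ]
      have hj1 : ((j:ℝ)+1) ≠ 0 := by positivity
      push_cast
      field_simp
    · rw [if_neg hkN]
      have hk1 : k = N+1 := by
        simp only [Finset.mem_range] at hk
        omega
      subst hk1
      simp only [Nat.sub_self, pow_zero, Nat.factorial_zero, Nat.cast_one, mul_one, div_one]
      exact hasDerivAt_const t _
  have H := HasDerivAt.fun_sum h
  have hval : ∑ k ∈ range (N+2),
      (if k ≤ N then hh k xs * t^(N-k)/(Nat.factorial (N-k):ℝ) else 0) = psi N xs t := by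
    rw [Finset.sum_range_succ, if_neg (by omega), add_zero, psi]
    apply Finset.sum_congr rfl
    intro k hk
    rw [if_pos (by simpa [Nat.lt_succ_iff] using hk)]
  rw [hval] at H
  exact H

lemma psi_cont (N : ℕ) (xs : List ℝ) : Continuous (fun u => psi (N+1) xs u) :=
  (Differentiable.continuous (fun u => (hasDerivAt_psi N xs u).differentiableAt))

lemma hh_of_zeros (xs : List ℝ) (hxs : ∀ y ∈ xs, y = 0) (k : ℕ) : hh (k+1) xs = 0 := by
  induction xs with
  | nil => simp
  | cons x l ih =>
    rw [hh_cons, hxs x List.mem_cons_self]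
    rw [ih (fun y hy => hxs y (List.mem_cons_of_mem _ hy))]
    ring

theorem main_ineq : ∀ (q : ℕ) (xs : List ℝ) (t : ℝ),
    ((xs.map (fun y => y^2)).sum)^q / (2^q * (Nat.factorial q : ℝ)) ≤ psi (2*q) xs t := by
  intro q
  induction q with
  | zero =>
    intro xs t
    norm_num [psi]
  | succ q ih =>
    intro xs t
    set c := (xs.map (fun y => y^2)).sum with hc
    have hc0 : 0 ≤ c := by
      apply List.sum_nonneg
      intro a ha
      obtain ⟨y, _, rfl⟩ := List.mem_map.1 ha
      positivity
    have hfq : (0:ℝ) < 2^q * (Nat.factorial q : ℝ) := by positivity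
    have hfq1 : (0:ℝ) < 2^(q+1) * (Nat.factorial (q+1) : ℝ) := by positivity
    rcases eq_or_lt_of_le hc0 with hczero | hcpos
    · -- degenerate case : all entries are zero
      have hall : ∀ y ∈ xs, y = 0 := by
        intro y hy
        have h2 : y^2 ≤ 0 := by
          have := List.single_le_sum (l := xs.map (fun y => y^2))
            (by intro a ha; obtain ⟨z, _, rfl⟩ := List.mem_map.1 ha; positivity)
            (y^2) (List.mem_map.2 ⟨y, hy, rfl⟩)
          rw [← hc] at this
          linarith
        nlinarith [sq_nonneg y]
      have hpsi : psi (2*(q+1)) xs t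
          = t^(2*(q+1))/(Nat.factorial (2*(q+1)) : ℝ) := by
        rw [psi, Finset.sum_eq_single 0]
        · simp
        · intro k hk hk0
          obtain ⟨k', rfl⟩ : ∃ k', k = k'+1 := ⟨k-1, by omega⟩
          rw [hh_of_zeros xs hall k']
          simp
        · intro h
          simp at h
      rw [hpsi, ← hczero]
      rw [zero_pow (by omega : q+1 ≠ 0), zero_div]
      apply div_nonneg
      · exact Even.pow_nonneg (by exact ⟨q+1, by ring⟩) t
      · positivity
    · -- main case
      set κ := c^q / (2^q * (Nat.factorial q : ℝ)) with hκ
      have hκpos : 0 < κ := by positivity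
      have hlow : ∀ (ys : List ℝ) (u : ℝ), c ≤ (ys.map (fun y => y^2)).sum →
          κ ≤ psi (2*q) ys u := by
        intro ys u hcy
        refine le_trans ?_ (ih ys u)
        rw [hκ]
        gcongr
      -- derivatives
      have hd2 : ∀ u : ℝ, HasDerivAt (fun v => psi (2*q+1) xs v) (psi (2*q) xs u) u :=
        fun u => hasDerivAt_psi (2*q) xs u
      have hd1 : ∀ u : ℝ, HasDerivAt (fun v => psi (2*q+2) xs v) (psi (2*q+1) xs u) u :=
        fun u => hasDerivAt_psi (2*q+1) xs u
      -- slope bound for psi (2q+1)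
      have hmono : ∀ a b : ℝ, a ≤ b →
          psi (2*q+1) xs a + κ*(b-a) ≤ psi (2*q+1) xs b := by
        intro a b hab
        have hg : Monotone (fun u => psi (2*q+1) xs u - κ*u) := by
          apply monotone_of_deriv_nonneg
          · intro u
            exact ((hd2 u).sub ((hasDerivAt_id u).const_mul κ)).differentiableAt
          · intro u
            have hD : HasDerivAt (fun v => psi (2*q+1) xs v - κ*v) (psi (2*q) xs u - κ*1) u :=
              (hd2 u).sub ((hasDerivAt_id u).const_mul κ)
            rw [hD.deriv]
            have := hlow xs u (le_refl c)
            linarith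
        have := hg hab
        simp only at this
        linarith
      -- find a critical point
      obtain ⟨t₀, ht₀⟩ : ∃ t₀, psi (2*q+1) xs t₀ = 0 := by
        set b := (|psi (2*q+1) xs 0| + 1)/κ with hb
        have hbpos : 0 < b := by positivity
        have hup : 1 ≤ psi (2*q+1) xs b := by
          have := hmono 0 b (le_of_lt hbpos)
          have hone : κ * (b - 0) = |psi (2*q+1) xs 0| + 1 := by
            rw [hb]; have := hκpos.ne'; field_simp; ring
          nlinarith [abs_nonneg (psi (2*q+1) xs 0), le_abs_self (psi (2*q+1) xs 0),
            neg_abs_le (psi (2*q+1) xs 0)]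
        have hdown : psi (2*q+1) xs (-b) ≤ -1 := by
          have := hmono (-b) 0 (by linarith)
          have hone : κ * (0 - (-b)) = |psi (2*q+1) xs 0| + 1 := by
            rw [hb]; have := hκpos.ne'; field_simp; ring
          nlinarith [le_abs_self (psi (2*q+1) xs 0), neg_abs_le (psi (2*q+1) xs 0)]
        have hcont : ContinuousOn (fun v => psi (2*q+1) xs v) (Set.Icc (-b) b) :=
          (psi_cont (2*q) xs).continuousOn
        have hsub := intermediate_value_Icc (by linarith : -b ≤ b) hcont
        have h0mem : (0:ℝ) ∈ Set.Icc (psi (2*q+1) xs (-b)) (psi (2*q+1) xs b) := by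
          constructor <;> linarith
        obtain ⟨t₀, _, ht₀⟩ := hsub h0mem
        exact ⟨t₀, ht₀⟩
      -- value at the critical point
      have hval : c^(q+1) / (2^(q+1) * (Nat.factorial (q+1) : ℝ)) ≤ psi (2*q+2) xs t₀ := by
        have hkey := key (2*q) xs t₀
        rw [ht₀] at hkey
        have hsum : c * κ ≤ (xs.map (fun y => y^2 * psi (2*q) (y::xs) t₀)).sum := by
          have h1 : (xs.map (fun y => y^2 * κ)).sum
              ≤ (xs.map (fun y => y^2 * psi (2*q) (y::xs) t₀)).sum := by
            apply List.sum_le_sum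
            intro y hy
            have : κ ≤ psi (2*q) (y::xs) t₀ := by
              apply hlow
              simp only [List.map_cons, List.sum_cons, ← hc]
              nlinarith [sq_nonneg y]
            nlinarith [sq_nonneg y]
          have h2 : (xs.map (fun y => y^2 * κ)).sum = c * κ := by
            rw [lsum_mul_right]
          linarith
        have hcoef : ((2*q : ℝ)+2) * (c^(q+1) / (2^(q+1) * (Nat.factorial (q+1) : ℝ)))
            = c * κ := by
          rw [hκ, Nat.factorial_succ]
          push_cast
          field_simp
          ring
        have hpos : (0:ℝ) < (2*q:ℝ)+2 := by positivity
        push_cast at hkey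
        have h5 : ((2*q:ℝ)+2) * (c^(q+1)/(2^(q+1)*(Nat.factorial (q+1):ℝ)))
            ≤ ((2*q:ℝ)+2) * psi (2*q+2) xs t₀ := by
          rw [hcoef]
          linarith
        exact le_of_mul_le_mul_left h5 hpos
      -- conclude for all t
      have hglob : psi (2*q+2) xs t₀ ≤ psi (2*q+2) xs t := by
        rcases le_total t₀ t with h | h
        · have hm : MonotoneOn (fun v => psi (2*q+2) xs v) (Set.Ici t₀) := by
            apply monotoneOn_of_deriv_nonneg (convex_Ici t₀)
            · exact (psi_cont (2*q+1) xs).continuousOn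
            · intro u hu
              exact (hd1 u).differentiableAt.differentiableWithinAt
            · intro u hu
              rw [(hd1 u).deriv]
              rw [interior_Ici] at hu
              have := hmono t₀ u (le_of_lt hu)
              rw [ht₀] at this
              have h6 : 0 ≤ κ*(u - t₀) := by
                apply mul_nonneg hκpos.le
                have := Set.mem_Ioi.1 hu
                linarith
              linarith
          exact hm (Set.self_mem_Ici) (Set.mem_Ici.2 h) h
        · have hm : AntitoneOn (fun v => psi (2*q+2) xs v) (Set.Iic t₀) := by
            apply antitoneOn_of_deriv_nonpos (convex_Iic t₀)
            · exact (psi_cont (2*q+1) xs).continuousOn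
            · intro u hu
              exact (hd1 u).differentiableAt.differentiableWithinAt
            · intro u hu
              rw [(hd1 u).deriv]
              rw [interior_Iic] at hu
              have := hmono u t₀ (le_of_lt hu)
              rw [ht₀] at this
              have h6 : 0 ≤ κ*(t₀ - u) := by
                apply mul_nonneg hκpos.le
                have := Set.mem_Iio.1 hu
                linarith
              linarith
          exact hm (Set.mem_Iic.2 h) (Set.self_mem_Iic) h
      have h2q2 : 2*(q+1) = 2*q+2 := by ring
      rw [h2q2]
      calc c^(q+1) / (2^(q+1) * (Nat.factorial (q+1) : ℝ))
          ≤ psi (2*q+2) xs t₀ := hval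
        _ ≤ psi (2*q+2) xs t := hglob

lemma chs_zero (n : ℕ) (x : Fin n → ℝ) : chs n 0 x = 1 := by
  rw [chs, Finset.sym_zero]
  rw [Finset.sum_singleton]
  norm_num [show ((∅ : Sym (Fin n) 0) : Multiset (Fin n)) = 0 from rfl]

lemma chs_nil (q : ℕ) (x : Fin 0 → ℝ) : chs 0 (q+1) x = 0 := by
  rw [chs, Finset.univ_eq_empty, Finset.sym_empty]
  simp

lemma chs_conv (n k : ℕ) (x : Fin (n+1) → ℝ) :
    chs (n+1) k x
      = ∑ m : Sym (Option (Fin n)) k,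
          ((m : Multiset (Option (Fin n))).map
            (fun o => x ((finSuccEquiv n).symm o))).prod := by
  rw [chs, Finset.sym_univ]
  apply Fintype.sum_equiv (Sym.equivCongr (finSuccEquiv n))
  intro m
  simp only [Sym.equivCongr, Equiv.coe_fn_mk, Sym.coe_map, Multiset.map_map,
    Function.comp_def, Equiv.symm_apply_apply]

lemma chs_rec (n q : ℕ) (x : Fin (n+1) → ℝ) :
    chs (n+1) (q+1) x = chs n (q+1) (x ∘ Fin.succ) + x 0 * chs (n+1) q x := by
  classical
  rw [chs_conv (n := n) (k := q+1), chs_conv (n := n) (k := q)]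
  set y : Option (Fin n) → ℝ := fun o => x ((finSuccEquiv n).symm o) with hy
  have := Equiv.sum_comp (symOptionSuccEquiv (α := Fin n) (n := q)).symm
    (fun m : Sym (Option (Fin n)) (q+1) => ((m : Multiset (Option (Fin n))).map y).prod)
  rw [← this, Fintype.sum_sum_type]
  have hinl : ∀ s : Sym (Option (Fin n)) q,
      ((((symOptionSuccEquiv).symm (Sum.inl s) : Sym (Option (Fin n)) (q+1))
          : Multiset (Option (Fin n))).map y).prod
        = x 0 * ((s : Multiset (Option (Fin n))).map y).prod := by
    intro s
    have : (symOptionSuccEquiv).symm (Sum.inl s) = Sym.cons none s := rfl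
    rw [this, Sym.coe_cons, Multiset.map_cons, Multiset.prod_cons]
    congr 1
  have hinr : ∀ s : Sym (Fin n) (q+1),
      ((((symOptionSuccEquiv).symm (Sum.inr s) : Sym (Option (Fin n)) (q+1))
          : Multiset (Option (Fin n))).map y).prod
        = ((s : Multiset (Fin n)).map (x ∘ Fin.succ)).prod := by
    intro s
    have : (symOptionSuccEquiv).symm (Sum.inr s) = s.map Function.Embedding.some := rfl
    rw [this, Sym.coe_map, Multiset.map_map]
    have hcomp : y ∘ (⇑(Function.Embedding.some : Fin n ↪ Option (Fin n))) = x ∘ Fin.succ := by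
      funext i
      simp [hy, finSuccEquiv_symm_some]
    rw [hcomp]
  rw [Finset.sum_congr rfl (fun s _ => hinl s), Finset.sum_congr rfl (fun s _ => hinr s)]
  rw [← Finset.mul_sum, chs, Finset.sym_univ]
  ring

lemma chs_eq_hh : ∀ (n q : ℕ) (x : Fin n → ℝ), chs n q x = hh q (List.ofFn x) := by
  intro n
  induction n with
  | zero =>
    intro q x
    cases q with
    | zero => rw [chs_zero, List.ofFn_zero, hh_zero]
    | succ q => rw [chs_nil, List.ofFn_zero, hh_nil]
  | succ n ihn =>
    intro q x
    induction q with
    | zero => rw [chs_zero, hh_zero]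
    | succ q ihq =>
      rw [chs_rec, ihq, ihn (q+1) (x ∘ Fin.succ), List.ofFn_succ, hh_cons, ← List.ofFn_succ,
        show (x ∘ Fin.succ) = (fun i => x i.succ) from rfl]

theorem hunter_inequality (n p : ℕ) (x : Fin n → ℝ) :
    (∑ j, x j ^ 2) ^ p / (2 ^ p * Nat.factorial p) ≤ chs n (2 * p) x := by
  have h := main_ineq p (List.ofFn x) 0
  rw [psi_at_zero] at h
  rw [chs_eq_hh]
  have hs : ((List.ofFn x).map (fun y => y^2)).sum = ∑ j, x j ^ 2 := by
    rw [List.map_ofFn, List.sum_ofFn]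
    rfl
  rw [hs] at h
  exact h
end

section
/- For any nonnegative integer p and distinct reals x_1, …, x_n (n ≥ 2), the sum ∑_{j=1}^n x_j^{2p+n−1}/∏_{k≠j}(x_j − x_k) is nonnegative. -/
open Polynomial Finset

/-- Iterated version of `Polynomial.card_roots_le_derivative`. -/
lemma card_roots_le_iterate_derivative (k : ℕ) (g : ℝ[X]) :
    Multiset.card g.roots ≤ Multiset.card (derivative^[k] g).roots + k := by
  induction k with
  | zero => simp
  | succ k ih =>
    rw [Function.iterate_succ_apply']
    have := Polynomial.card_roots_le_derivative (derivative^[k] g)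
    omega

/-- The top coefficient of a Lagrange basis polynomial is the nodal weight. -/
lemma coeff_lagrange_basis_top {ι : Type*} [DecidableEq ι] (s : Finset ι) (v : ι → ℝ)
    (i : ι) (hi : i ∈ s) :
    (Lagrange.basis s v i).coeff (#s - 1) = Lagrange.nodalWeight s v i := by
  have hb : Lagrange.basis s v i =
      Polynomial.C (Lagrange.nodalWeight s v i) * Lagrange.nodal (s.erase i) v := by
    unfold Lagrange.basis Lagrange.basisDivisor Lagrange.nodalWeight Lagrange.nodal
    rw [Finset.prod_mul_distrib, map_prod]
  have hcard : #(s.erase i) = #s - 1 := Finset.card_erase_of_mem hi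
  have hm : (Lagrange.nodal (s.erase i) v).Monic := Lagrange.nodal_monic
  have hdeg : (Lagrange.nodal (s.erase i) v).natDegree = #s - 1 := by
    rw [Lagrange.natDegree_nodal, hcard]
  rw [hb, Polynomial.coeff_C_mul, ← hdeg, hm.coeff_natDegree, mul_one]

/-- The top coefficient of the Lagrange interpolant is the divided-difference sum. -/
lemma coeff_interpolate_top {ι : Type*} [DecidableEq ι] (s : Finset ι) (v : ι → ℝ)
    (r : ι → ℝ) :
    (Lagrange.interpolate s v r).coeff (#s - 1) =
      ∑ j ∈ s, r j / ∏ k ∈ s.erase j, (v j - v k) := by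
  rw [Lagrange.interpolate_apply, Polynomial.finset_sum_coeff]
  refine Finset.sum_congr rfl fun j hj => ?_
  rw [Polynomial.coeff_C_mul, coeff_lagrange_basis_top s v j hj, Lagrange.nodalWeight,
    div_eq_mul_inv, Finset.prod_inv_distrib]

theorem divided_difference_even_monomial_nonneg (n p : ℕ) (hn : 2 ≤ n)
    (x : Fin n → ℝ) (hinj : Function.Injective x) :
    0 ≤ ∑ j, x j ^ (2 * p + n - 1) / ∏ k ∈ Finset.univ.erase j, (x j - x k) := by
  set m : ℕ := 2 * p + n - 1 with hm
  have hinjOn : Set.InjOn x (Finset.univ : Finset (Fin n)) := hinj.injOn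
  set r : Fin n → ℝ := fun j => x j ^ m with hr
  set P : ℝ[X] := Lagrange.interpolate Finset.univ x r with hP
  set g : ℝ[X] := X ^ m - P with hg
  have hcard : #(Finset.univ : Finset (Fin n)) = n := by simp
  have hPdeg : P.natDegree ≤ n - 1 := by
    have := Lagrange.degree_interpolate_le (r := r) hinjOn
    rw [hcard] at this
    exact Polynomial.natDegree_le_iff_degree_le.mpr this
  -- every node is a root of g
  have hroot : ∀ j : Fin n, g.IsRoot (x j) := by
    intro j
    have : P.eval (x j) = r j := Lagrange.eval_interpolate_at_node r hinjOn (Finset.mem_univ j)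
    simp only [Polynomial.IsRoot, hg, Polynomial.eval_sub, Polynomial.eval_pow,
      Polynomial.eval_X, this, hr, sub_self]
  -- there is ξ with (derivative^[n-1] g).eval ξ = 0
  have hξ : ∃ ξ : ℝ, (derivative^[n - 1] g).eval ξ = 0 := by
    by_cases hg0 : g = 0
    · refine ⟨0, ?_⟩
      simp [hg0]
    · have hsub : (Finset.univ.image x) ⊆ g.roots.toFinset := by
        intro a ha
        obtain ⟨j, _, rfl⟩ := Finset.mem_image.mp ha
        exact Multiset.mem_toFinset.mpr (Polynomial.mem_roots'.mpr ⟨hg0, hroot j⟩)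
      have hn_le : n ≤ Multiset.card g.roots := by
        calc n = #(Finset.univ.image x) := by
                rw [Finset.card_image_of_injective _ hinj, hcard]
          _ ≤ #g.roots.toFinset := Finset.card_le_card hsub
          _ ≤ Multiset.card g.roots := g.roots.toFinset_card_le
      have := card_roots_le_iterate_derivative (n - 1) g
      have hpos : 0 < Multiset.card (derivative^[n - 1] g).roots := by omega
      obtain ⟨ξ, hξmem⟩ := Multiset.card_pos_iff_exists_mem.mp hpos
      exact ⟨ξ, (Polynomial.mem_roots'.mp hξmem).2⟩
  obtain ⟨ξ, hξ0⟩ := hξ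
  -- compute derivative^[n-1] g
  have hiter : derivative^[n - 1] g = derivative^[n - 1] (X ^ m : ℝ[X]) - derivative^[n - 1] P := by
    rw [hg, Polynomial.iterate_derivative_sub]
  have hX : (derivative^[n - 1] (X ^ m : ℝ[X])).eval ξ =
      (m.descFactorial (n - 1) : ℝ) * ξ ^ (2 * p) := by
    rw [Polynomial.iterate_derivative_X_pow_eq_C_mul]
    have : m - (n - 1) = 2 * p := by omega
    rw [this]
    simp
  have hPiter : derivative^[n - 1] P = Polynomial.C ((Nat.factorial (n - 1) : ℝ) * P.coeff (n - 1)) := by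
    have hd0 : (derivative^[n - 1] P).natDegree ≤ 0 := by
      have := Polynomial.natDegree_iterate_derivative P (n - 1)
      omega
    rw [Polynomial.eq_C_of_natDegree_le_zero hd0, Polynomial.coeff_iterate_derivative]
    rw [Nat.zero_add, Nat.descFactorial_self, nsmul_eq_mul]
  -- conclude
  have hkey : (m.descFactorial (n - 1) : ℝ) * ξ ^ (2 * p) = (Nat.factorial (n - 1) : ℝ) * P.coeff (n - 1) := by
    have := hξ0
    rw [hiter, Polynomial.eval_sub, hX, hPiter, Polynomial.eval_C] at this
    linarith
  have hSP : P.coeff (n - 1) = ∑ j, x j ^ m / ∏ k ∈ Finset.univ.erase j, (x j - x k) := by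
    have := coeff_interpolate_top (Finset.univ : Finset (Fin n)) x r
    rw [hcard] at this
    exact this
  have hfac : (0:ℝ) < (Nat.factorial (n - 1) : ℝ) := by positivity
  have hnonneg : 0 ≤ (m.descFactorial (n - 1) : ℝ) * ξ ^ (2 * p) := by
    apply mul_nonneg (Nat.cast_nonneg _)
    rw [pow_mul]
    positivity
  rw [← hSP]
  nlinarith [hkey, hnonneg, hfac]
end

section
/- Let n ≥ 2 and let f : ℝ → ℝ be a function on an open interval (α, β) whose (n−1)-th derivative exists and is convex on (α, β). Then for any distinct x_1, …, x_n in (α, β), ∑_{j=1}^n f(x_j)/∏_{k≠j}(x_j − x_k) ≥ f^{(n−1)}((x_1+⋯+x_n)/n)/(n−1)!. -/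
open Set Polynomial Finset

/-- Rolle step: a continuous function vanishing at `m+2` increasing points of an open
interval has a derivative vanishing at `m+1` increasing points. -/
lemma fz_rolle_step {α β : ℝ} {G : ℝ → ℝ} (hG : ContinuousOn G (Set.Ioo α β))
    {m : ℕ} (y : Fin (m + 2) → ℝ) (hy : StrictMono y) (hyI : ∀ i, y i ∈ Set.Ioo α β)
    (hz : ∀ i, G (y i) = 0) :
    ∃ z : Fin (m + 1) → ℝ, StrictMono z ∧ (∀ i, z i ∈ Set.Ioo α β) ∧
      ∀ i, deriv G (z i) = 0 := by
  have key : ∀ i : Fin (m + 1),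
      ∃ c ∈ Set.Ioo (y i.castSucc) (y i.succ), deriv G c = 0 := by
    intro i
    have hab : y i.castSucc < y i.succ := hy (Fin.castSucc_lt_succ (i := i))
    have hsub : Set.Icc (y i.castSucc) (y i.succ) ⊆ Set.Ioo α β := by
      intro t ht
      exact ⟨lt_of_lt_of_le (hyI i.castSucc).1 ht.1, lt_of_le_of_lt ht.2 (hyI i.succ).2⟩
    exact exists_deriv_eq_zero hab (hG.mono hsub) ((hz _).trans (hz _).symm)
  choose z hz1 hz2 using key
  have hzmem : ∀ i, z i ∈ Set.Ioo α β := by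
    intro i
    exact ⟨lt_trans (hyI i.castSucc).1 (hz1 i).1, lt_trans (hz1 i).2 (hyI i.succ).2⟩
  refine ⟨z, ?_, hzmem, hz2⟩
  intro i j hij
  have h1 : z i < y i.succ := (hz1 i).2
  have h2 : y j.castSucc < z j := (hz1 j).1
  have h3 : y i.succ ≤ y j.castSucc := by
    apply hy.monotone
    rw [Fin.le_def]
    simp only [Fin.val_succ, Fin.coe_castSucc]
    exact Nat.succ_le_of_lt hij
  linarith

/-- Iterated Rolle: a function vanishing at `m+1` increasing points of an open interval,
whose iterated derivatives up to order `m-1` are differentiable, has an `m`-th iterated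
derivative vanishing somewhere in the interval. -/
lemma fz_rolle_chain {α β : ℝ} {m : ℕ} :
    ∀ (e : ℝ → ℝ),
    (∀ k < m, DifferentiableOn ℝ (iteratedDerivWithin k e (Set.Ioo α β)) (Set.Ioo α β)) →
    ∀ (y : Fin (m + 1) → ℝ), StrictMono y → (∀ i, y i ∈ Set.Ioo α β) →
    (∀ i, e (y i) = 0) →
    ∃ ξ ∈ Set.Ioo α β, iteratedDerivWithin m e (Set.Ioo α β) ξ = 0 := by
  induction m with
  | zero =>
    intro e _ y _ hyI hz
    exact ⟨y 0, hyI 0, by simpa using hz 0⟩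
  | succ m ih =>
    intro e hd y hy hyI hz
    have he : DifferentiableOn ℝ e (Set.Ioo α β) := by
      have := hd 0 (Nat.succ_pos m)
      simpa using this
    obtain ⟨z, hz1, hz2, hz3⟩ := fz_rolle_step he.continuousOn y hy hyI hz
    have hzz : ∀ i, derivWithin e (Set.Ioo α β) (z i) = 0 := fun i => by
      rw [derivWithin_of_isOpen isOpen_Ioo (hz2 i)]; exact hz3 i
    have hd' : ∀ k < m, DifferentiableOn ℝ
        (iteratedDerivWithin k (derivWithin e (Set.Ioo α β)) (Set.Ioo α β)) (Set.Ioo α β) := by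
      intro k hk
      refine (hd (k + 1) (by omega)).congr fun t ht => ?_
      exact (congr_fun (iteratedDerivWithin_succ' (n := k) (f := e) (s := Set.Ioo α β)) t).symm
    obtain ⟨ξ, hξ, h0⟩ := ih (derivWithin e (Set.Ioo α β)) hd' z hz1 hz2 hzz
    refine ⟨ξ, hξ, ?_⟩
    rw [iteratedDerivWithin_succ']
    exact h0

/-- Iterated derivative of `f - polynomial`. -/
lemma fz_iter_sub_poly {α β : ℝ} {f : ℝ → ℝ} {m : ℕ}
    (hd : ∀ k < m, DifferentiableOn ℝ (iteratedDerivWithin k f (Set.Ioo α β)) (Set.Ioo α β))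
    (r : Polynomial ℝ) :
    ∀ k, k ≤ m → ∀ x ∈ Set.Ioo α β,
      iteratedDerivWithin k (fun t => f t - r.eval t) (Set.Ioo α β) x
        = iteratedDerivWithin k f (Set.Ioo α β) x - (Polynomial.derivative^[k] r).eval x := by
  intro k
  induction k with
  | zero => intro _ x _; simp
  | succ k ih =>
    intro hk x hx
    have hk' : k ≤ m := by omega
    have hkm : k < m := by omega
    have hud : UniqueDiffWithinAt ℝ (Set.Ioo α β) x := (uniqueDiffOn_Ioo α β) x hx
    rw [iteratedDerivWithin_succ]
    have hcong : derivWithin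
        (iteratedDerivWithin k (fun t => f t - r.eval t) (Set.Ioo α β)) (Set.Ioo α β) x
        = derivWithin (fun t => iteratedDerivWithin k f (Set.Ioo α β) t
            - (Polynomial.derivative^[k] r).eval t) (Set.Ioo α β) x :=
      derivWithin_congr (fun t ht => ih hk' t ht) (ih hk' x hx)
    rw [hcong, derivWithin_fun_sub (hd k hkm x hx)
      (Polynomial.differentiableWithinAt _)]
    rw [← iteratedDerivWithin_succ]
    congr 1
    rw [derivWithin_of_isOpen isOpen_Ioo hx, Polynomial.deriv,
      Function.iterate_succ_apply']

/-- Additivity of iterated polynomial derivative. -/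
lemma fz_iterate_derivative_add (p q : Polynomial ℝ) (k : ℕ) :
    Polynomial.derivative^[k] (p + q)
      = Polynomial.derivative^[k] p + Polynomial.derivative^[k] q := by
  induction k with
  | zero => simp
  | succ k ih => simp [Function.iterate_succ_apply', ih]

/-- The top coefficient of the Lagrange interpolant is the divided difference. -/
lemma fz_interp_coeff (s : Finset ℝ) (F : ℝ → ℝ) :
    (Lagrange.interpolate s id F).coeff (s.card - 1)
      = ∑ a ∈ s, F a * (∏ b ∈ s.erase a, (a - b))⁻¹ := by
  rw [Lagrange.interpolate_apply, Polynomial.finset_sum_coeff]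
  refine Finset.sum_congr rfl fun a ha => ?_
  rw [Polynomial.coeff_C_mul]
  congr 1
  have hinj : Set.InjOn id (s : Set ℝ) := Function.injective_id.injOn
  have hnd := Lagrange.natDegree_basis hinj ha
  rw [← hnd, Polynomial.coeff_natDegree, Lagrange.basis, Polynomial.leadingCoeff_prod,
    ← Finset.prod_inv_distrib]
  refine Finset.prod_congr rfl fun b hb => ?_
  rw [Lagrange.basisDivisor, Polynomial.leadingCoeff_mul, Polynomial.leadingCoeff_C,
    (Polynomial.monic_X_sub_C _).leadingCoeff, mul_one]
  rfl

/-- Divided difference of a polynomial of degree `< s.card`. -/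
lemma fz_dd_poly (s : Finset ℝ) (P : Polynomial ℝ) (hP : P.degree < s.card) :
    ∑ a ∈ s, P.eval a * (∏ b ∈ s.erase a, (a - b))⁻¹ = P.coeff (s.card - 1) := by
  rw [← fz_interp_coeff]
  congr 1
  exact (Lagrange.eq_interpolate Function.injective_id.injOn hP).symm

/-- Divided difference of `X ^ s.card`. -/
lemma fz_dd_pow (s : Finset ℝ) (h2 : 0 < s.card) :
    ∑ a ∈ s, a ^ s.card * (∏ b ∈ s.erase a, (a - b))⁻¹ = ∑ a ∈ s, a := by
  have hdeg : ((X : Polynomial ℝ) ^ s.card - Lagrange.nodal s id).degree < s.card := by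
    have h := Polynomial.degree_sub_lt (p := (X : Polynomial ℝ) ^ s.card)
      (q := Lagrange.nodal s id) ?_ ?_ ?_
    · rwa [Polynomial.degree_X_pow] at h
    · rw [Polynomial.degree_X_pow, Lagrange.degree_nodal]
    · exact pow_ne_zero _ Polynomial.X_ne_zero
    · rw [(Polynomial.monic_X_pow _).leadingCoeff, Lagrange.nodal_monic.leadingCoeff]
  have h := fz_dd_poly s _ hdeg
  have hcoeff : (Lagrange.nodal s id).coeff (s.card - 1) = -∑ a ∈ s, a := by
    rw [Lagrange.nodal_eq, Polynomial.prod_X_sub_C_coeff_card_pred s id h2]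
    simp
  rw [Polynomial.coeff_sub, Polynomial.coeff_X_pow, if_neg (by omega), hcoeff] at h
  simp only [Polynomial.eval_sub, Polynomial.eval_pow, Polynomial.eval_X] at h
  have heq : ∀ a ∈ s, ((a : ℝ) ^ s.card - (Lagrange.nodal s id).eval a)
      * (∏ b ∈ s.erase a, (a - b))⁻¹ = a ^ s.card * (∏ b ∈ s.erase a, (a - b))⁻¹ := by
    intro a ha
    have h0 : (Lagrange.nodal s id).eval a = 0 := Lagrange.eval_nodal_at_node (v := id) ha
    rw [h0]
    ring
  rw [Finset.sum_congr rfl heq] at h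
  rw [h]
  ring

/-- Supporting line of a convex function on an open interval. -/
lemma fz_support_line {α β : ℝ} {g : ℝ → ℝ} (hg : ConvexOn ℝ (Set.Ioo α β) g)
    {c : ℝ} (hc : c ∈ Set.Ioo α β) :
    ∃ m : ℝ, ∀ y ∈ Set.Ioo α β, g c + m * (y - c) ≤ g y := by
  obtain ⟨hαc, hcβ⟩ := hc
  have hy₀ : (α + c) / 2 ∈ Set.Ioo α c := ⟨by linarith, by linarith⟩
  have hy₁ : c < (c + β) / 2 ∧ (c + β) / 2 < β := ⟨by linarith, by linarith⟩
  set y₁ := (c + β) / 2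
  set S : Set ℝ := (fun y => (g c - g y) / (c - y)) '' Set.Ioo α c with hS
  have hne : S.Nonempty := ⟨_, ⟨_, hy₀, rfl⟩⟩
  have hub : ∀ t ∈ S, t ≤ (g y₁ - g c) / (y₁ - c) := by
    rintro t ⟨w, hw, rfl⟩
    exact hg.slope_mono_adjacent ⟨hw.1, hw.2.trans hcβ⟩ ⟨hαc.trans hy₁.1, hy₁.2⟩ hw.2 hy₁.1
  set m := sSup S with hm
  refine ⟨m, fun y hy => ?_⟩
  rcases lt_trichotomy y c with h | h | h
  · have hmem : (g c - g y) / (c - y) ∈ S := ⟨y, ⟨hy.1, h⟩, rfl⟩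
    have hle : (g c - g y) / (c - y) ≤ m := le_csSup ⟨_, hub⟩ hmem
    have hcy : (0 : ℝ) < c - y := by linarith
    rw [div_le_iff₀ hcy] at hle
    have hring : m * (y - c) = -(m * (c - y)) := by ring
    linarith
  · simp [h]
  · have hle : m ≤ (g y - g c) / (y - c) := by
      refine csSup_le hne ?_
      rintro t ⟨w, hw, rfl⟩
      exact hg.slope_mono_adjacent ⟨hw.1, hw.2.trans hcβ⟩ hy hw.2 h
    have hyc : (0 : ℝ) < y - c := by linarith
    rw [le_div_iff₀ hyc] at hle
    linarith

theorem farwig_zwick_lower_bound (n : ℕ) (hn : 2 ≤ n) (α β : ℝ) (f : ℝ → ℝ)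
    (hdiff : ∀ i < n - 1,
      DifferentiableOn ℝ (iteratedDerivWithin i f (Set.Ioo α β)) (Set.Ioo α β))
    (hconv : ConvexOn ℝ (Set.Ioo α β) (iteratedDerivWithin (n - 1) f (Set.Ioo α β)))
    (x : Fin n → ℝ) (hx : ∀ j, x j ∈ Set.Ioo α β) (hinj : Function.Injective x) :
    iteratedDerivWithin (n - 1) f (Set.Ioo α β) ((∑ j, x j) / n) / (Nat.factorial (n - 1)) ≤
      ∑ j, f (x j) / ∏ k ∈ Finset.univ.erase j, (x j - x k) := by
  obtain ⟨K, rfl⟩ : ∃ K, n = K + 2 := ⟨n - 2, by omega⟩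
  have hn1 : K + 2 - 1 = K + 1 := by omega
  simp only [hn1] at hdiff hconv ⊢
  -- the finset of interpolation points
  set s : Finset ℝ := Finset.image x Finset.univ with hsdef
  have hcard : s.card = K + 2 := by
    rw [hsdef, Finset.card_image_of_injective _ hinj, Finset.card_univ, Fintype.card_fin]
  have hsum_pts : ∑ a ∈ s, a = ∑ j, x j := by
    rw [hsdef]
    exact Finset.sum_image (fun i _ j _ h => hinj h)
  have hsI : ∀ a ∈ s, a ∈ Set.Ioo α β := by
    intro a ha
    rw [hsdef, Finset.mem_image] at ha
    obtain ⟨j, _, rfl⟩ := ha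
    exact hx j
  -- rewrite the divided difference as a sum over `s`
  have hgoal_sum : ∑ j, f (x j) / ∏ k ∈ Finset.univ.erase j, (x j - x k)
      = ∑ a ∈ s, f a * (∏ b ∈ s.erase a, (a - b))⁻¹ := by
    rw [hsdef, Finset.sum_image (fun i _ j _ h => hinj h)]
    refine Finset.sum_congr rfl fun j _ => ?_
    rw [div_eq_mul_inv]
    congr 2
    rw [← Finset.image_erase hinj, Finset.prod_image (fun i _ j _ h => hinj h)]
  -- the mean
  set c : ℝ := (∑ j, x j) / ((K + 2 : ℕ) : ℝ) with hcdef
  have hKpos : (0 : ℝ) < ((K + 2 : ℕ) : ℝ) := by positivity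
  have hcI : c ∈ Set.Ioo α β := by
    have h1 : ∑ _j : Fin (K + 2), (α : ℝ) < ∑ j, x j :=
      Finset.sum_lt_sum_of_nonempty ⟨0, Finset.mem_univ 0⟩ fun j _ => (hx j).1
    have h2 : ∑ j, x j < ∑ _j : Fin (K + 2), (β : ℝ) :=
      Finset.sum_lt_sum_of_nonempty ⟨0, Finset.mem_univ 0⟩ fun j _ => (hx j).2
    simp only [Finset.sum_const, Finset.card_univ, Fintype.card_fin, nsmul_eq_mul] at h1 h2
    constructor
    · rw [hcdef, lt_div_iff₀ hKpos]
      calc α * ((K + 2 : ℕ) : ℝ) = ((K + 2 : ℕ) : ℝ) * α := by ring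
        _ < ∑ j, x j := h1
    · rw [hcdef, div_lt_iff₀ hKpos]
      calc ∑ j, x j < ((K + 2 : ℕ) : ℝ) * β := h2
        _ = β * ((K + 2 : ℕ) : ℝ) := by ring
  set g := iteratedDerivWithin (K + 1) f (Set.Ioo α β) with hgdef
  -- supporting line of g at c
  obtain ⟨m, hm⟩ := fz_support_line hconv hcI
  have hfac1 : (0 : ℝ) < ((K + 1).factorial : ℝ) := by positivity
  have hfac2 : (0 : ℝ) < ((K + 2).factorial : ℝ) := by positivity
  -- the comparison polynomial
  set A : ℝ := (g c - m * c) / ((K + 1).factorial : ℝ) with hA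
  set B : ℝ := m / ((K + 2).factorial : ℝ) with hB
  set q : Polynomial ℝ := C A * X ^ (K + 1) + C B * X ^ (K + 2) with hq
  have hd1 : (K + 2).descFactorial (K + 1) = (K + 2).factorial := by
    have h := Nat.descFactorial_succ (K + 2) (K + 1)
    rw [show K + 2 - (K + 1) = 1 by omega, one_mul,
      show K + 1 + 1 = K + 2 from rfl, Nat.descFactorial_self] at h
    exact h.symm
  have hqd : ∀ t : ℝ, (Polynomial.derivative^[K + 1] q).eval t = g c + m * (t - c) := by
    intro t
    have e1 : K + 1 - (K + 1) = 0 := by omega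
    have e2 : K + 2 - (K + 1) = 1 := by omega
    rw [hq, fz_iterate_derivative_add, Polynomial.iterate_derivative_C_mul,
      Polynomial.iterate_derivative_C_mul, Polynomial.iterate_derivative_X_pow_eq_C_mul,
      Polynomial.iterate_derivative_X_pow_eq_C_mul, e1, e2, Nat.descFactorial_self, hd1]
    simp only [Polynomial.eval_add, Polynomial.eval_mul, Polynomial.eval_C,
      Polynomial.eval_pow, Polynomial.eval_X, pow_zero, pow_one, mul_one]
    rw [hA, hB]
    field_simp
    ring
  -- divided difference of q
  have hdd1 : ∑ a ∈ s, a ^ (K + 1) * (∏ b ∈ s.erase a, (a - b))⁻¹ = 1 := by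
    have hdeg : ((X : Polynomial ℝ) ^ (K + 1)).degree < (s.card : WithBot ℕ) := by
      rw [Polynomial.degree_X_pow, hcard]
      exact_mod_cast Nat.lt_succ_self (K + 1)
    have h := fz_dd_poly s (X ^ (K + 1)) hdeg
    have hc1 : s.card - 1 = K + 1 := by omega
    rw [hc1, Polynomial.coeff_X_pow, if_pos rfl] at h
    simpa using h
  have hdd2 : ∑ a ∈ s, a ^ (K + 2) * (∏ b ∈ s.erase a, (a - b))⁻¹ = ∑ a ∈ s, a := by
    have h := fz_dd_pow s (by omega)
    rwa [hcard] at h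
  have hsum_c : ∑ a ∈ s, a = ((K + 2 : ℕ) : ℝ) * c := by
    rw [hsum_pts, hcdef]
    field_simp
  have hDq : ∑ a ∈ s, q.eval a * (∏ b ∈ s.erase a, (a - b))⁻¹
      = g c / ((K + 1).factorial : ℝ) := by
    have hstep : ∀ a ∈ s, q.eval a * (∏ b ∈ s.erase a, (a - b))⁻¹
        = A * (a ^ (K + 1) * (∏ b ∈ s.erase a, (a - b))⁻¹)
          + B * (a ^ (K + 2) * (∏ b ∈ s.erase a, (a - b))⁻¹) := by
      intro a _
      rw [hq]
      simp only [Polynomial.eval_add, Polynomial.eval_mul, Polynomial.eval_C,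
        Polynomial.eval_pow, Polynomial.eval_X]
      ring
    rw [Finset.sum_congr rfl hstep, Finset.sum_add_distrib, ← Finset.mul_sum, ← Finset.mul_sum,
      hdd1, hdd2, hsum_c, hA, hB]
    have h22 : ((K + 2).factorial : ℝ) = ((K + 2 : ℕ) : ℝ) * ((K + 1).factorial : ℝ) := by
      rw [show K + 2 = (K + 1) + 1 from rfl, Nat.factorial_succ]
      push_cast
      ring
    rw [h22]
    field_simp
    ring
  -- the interpolation polynomial of f - q
  set p : Polynomial ℝ := Lagrange.interpolate s id (fun a => f a - q.eval a) with hp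
  set r : Polynomial ℝ := q + p with hr
  have hre : ∀ a ∈ s, f a - r.eval a = 0 := by
    intro a ha
    have hev : p.eval a = f a - q.eval a := by
      have h := Lagrange.eval_interpolate_at_node (fun a => f a - q.eval a)
        Function.injective_id.injOn ha
      exact h
    rw [hr]
    simp only [Polynomial.eval_add]
    rw [hev]
    ring
  have hdegp : p.degree < ((K + 2 : ℕ) : WithBot ℕ) := by
    have h := Lagrange.degree_interpolate_lt (s := s) (fun a => f a - q.eval a)
      Function.injective_id.injOn
    rwa [hcard] at h
  -- sorted interpolation points
  set y : Fin (K + 2) → ℝ := fun i => s.orderEmbOfFin hcard i with hy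
  have hymono : StrictMono y := (s.orderEmbOfFin hcard).strictMono
  have hymem : ∀ i, y i ∈ Set.Ioo α β := fun i =>
    hsI _ (Finset.orderEmbOfFin_mem s hcard i)
  have hyzero : ∀ i, (fun t => f t - r.eval t) (y i) = 0 := fun i =>
    hre _ (Finset.orderEmbOfFin_mem s hcard i)
  -- iterated Rolle
  have hde : ∀ k < K + 1, DifferentiableOn ℝ
      (iteratedDerivWithin k (fun t => f t - r.eval t) (Set.Ioo α β)) (Set.Ioo α β) := by
    intro k hk
    refine DifferentiableOn.congr
      (f := fun t => iteratedDerivWithin k f (Set.Ioo α β) t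
        - (Polynomial.derivative^[k] r).eval t) ?_
      fun t ht => fz_iter_sub_poly hdiff r k (le_of_lt hk) t ht
    exact (hdiff k hk).sub ((Polynomial.differentiable _).differentiableOn)
  obtain ⟨ξ, hξ, h0⟩ := fz_rolle_chain (m := K + 1) (fun t => f t - r.eval t)
    hde y hymono hymem hyzero
  rw [fz_iter_sub_poly hdiff r (K + 1) le_rfl ξ hξ] at h0
  rw [hr, fz_iterate_derivative_add, Polynomial.eval_add, hqd ξ] at h0
  -- the (K+1)-st derivative of p is constant
  have hpconst : (Polynomial.derivative^[K + 1] p).eval ξ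
      = ((K + 1).factorial : ℝ) * p.coeff (K + 1) := by
    have hnd : (Polynomial.derivative^[K + 1] p).natDegree = 0 := by
      have h1 := Polynomial.natDegree_iterate_derivative p (K + 1)
      have h2 : p.natDegree ≤ K + 1 := by
        by_cases hp0 : p = 0
        · simp [hp0]
        · have := (Polynomial.natDegree_lt_iff_degree_lt hp0).mpr hdegp
          omega
      omega
    rw [Polynomial.eq_C_of_natDegree_eq_zero hnd, Polynomial.eval_C,
      Polynomial.coeff_iterate_derivative]
    simp only [Nat.zero_add, Nat.descFactorial_self, nsmul_eq_mul]
  rw [hpconst] at h0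
  -- nonnegativity of the divided difference of f - q
  have hDh : 0 ≤ p.coeff (K + 1) := by
    have hsupp := hm ξ hξ
    have : 0 ≤ ((K + 1).factorial : ℝ) * p.coeff (K + 1) := by linarith
    exact nonneg_of_mul_nonneg_right this hfac1
  have hcoeffp : p.coeff (K + 1)
      = ∑ a ∈ s, (f a - q.eval a) * (∏ b ∈ s.erase a, (a - b))⁻¹ := by
    have h := fz_interp_coeff s (fun a => f a - q.eval a)
    have hc1 : s.card - 1 = K + 1 := by omega
    rw [hc1] at h
    exact h
  -- conclusion
  rw [hgoal_sum]
  have hsplit : ∑ a ∈ s, f a * (∏ b ∈ s.erase a, (a - b))⁻¹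
      = ∑ a ∈ s, (f a - q.eval a) * (∏ b ∈ s.erase a, (a - b))⁻¹
        + ∑ a ∈ s, q.eval a * (∏ b ∈ s.erase a, (a - b))⁻¹ := by
    rw [← Finset.sum_add_distrib]
    refine Finset.sum_congr rfl fun a _ => by ring
  rw [hsplit, hDq, ← hcoeffp]
  linarith
end

section
/- Let a > 0 with a > 1, and let x_1, …, x_n be distinct real numbers (n ≥ 2). Then ∑_{j=1}^n a^{x_j}/∏_{k≠j}(x_j − x_k) > 0. -/
open Polynomial Finset

/-- Iterated Rolle: if `g` vanishes on a finset with more than `k` elements and all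
iterated derivatives are differentiable, then the `k`-th iterated derivative has a zero. -/
lemma iterated_rolle : ∀ (k : ℕ) (g : ℝ → ℝ),
    (∀ m, Differentiable ℝ (iteratedDeriv m g)) →
    ∀ s : Finset ℝ, k < s.card → (∀ y ∈ s, g y = 0) →
    ∃ ξ, iteratedDeriv k g ξ = 0 := by
  intro k
  induction k with
  | zero =>
    intro g _ s hcard hz
    obtain ⟨y, hy⟩ := Finset.card_pos.mp hcard
    exact ⟨y, by simpa using hz y hy⟩
  | succ k ih =>
    intro g hg s hcard hz
    have hgd : Differentiable ℝ g := by simpa [iteratedDeriv_zero] using hg 0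
    set m := s.card with hm
    have hm2 : k + 2 ≤ m := hcard
    set u : Fin m → ℝ := fun i => (s.orderIsoOfFin rfl i : ℝ) with hu
    have humono : StrictMono u := fun i j hij => (s.orderIsoOfFin rfl).lt_iff_lt.mpr hij
    have humem : ∀ i, u i ∈ s := fun i => (s.orderIsoOfFin rfl i).2
    have key : ∀ i : Fin (m - 1), ∃ c,
        c ∈ Set.Ioo (u ⟨i, by omega⟩) (u ⟨i + 1, by omega⟩) ∧ deriv g c = 0 := by
      intro i
      have hlt : u ⟨i, by omega⟩ < u ⟨i + 1, by omega⟩ := humono (by simp [Fin.lt_def])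
      obtain ⟨c, hc, hc0⟩ := exists_deriv_eq_zero hlt hgd.continuous.continuousOn
        (by rw [hz _ (humem _), hz _ (humem _)])
      exact ⟨c, hc, hc0⟩
    choose c hc hc0 using key
    have cmono : StrictMono c := by
      intro i j hij
      have h1 : (c i) < u ⟨i + 1, by omega⟩ := (hc i).2
      have h2 : u ⟨j, by omega⟩ < c j := (hc j).1
      have h3 : u ⟨(i : ℕ) + 1, by omega⟩ ≤ u ⟨j, by omega⟩ := by
        apply humono.monotone
        simp only [Fin.mk_le_mk]
        exact Fin.lt_def.mp hij
      linarith
    have hg' : ∀ m, Differentiable ℝ (iteratedDeriv m (deriv g)) := by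
      intro m; rw [← iteratedDeriv_succ']; exact hg (m + 1)
    obtain ⟨ξ, hξ⟩ := ih (deriv g) hg' (Finset.image c Finset.univ)
      (by
        rw [Finset.card_image_of_injective _ cmono.injective, Finset.card_univ,
          Fintype.card_fin]
        omega)
      (by
        intro y hy
        obtain ⟨i, _, rfl⟩ := Finset.mem_image.mp hy
        exact hc0 i)
    exact ⟨ξ, by rw [iteratedDeriv_succ']; exact hξ⟩

lemma iteratedDeriv_exp_sub_poly (c : ℝ) (p : ℝ[X]) (k : ℕ) :
    iteratedDeriv k (fun t => Real.exp (c * t) - p.eval t) =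
      fun t => c ^ k * Real.exp (c * t) - (derivative^[k] p).eval t := by
  induction k with
  | zero => simp
  | succ k ih =>
    rw [iteratedDeriv_succ, ih]
    funext t
    have h1 : HasDerivAt (fun t : ℝ => c ^ k * Real.exp (c * t))
        (c ^ (k + 1) * Real.exp (c * t)) t := by
      have : HasDerivAt (fun t : ℝ => c * t) c t := by
        simpa using (hasDerivAt_id t).const_mul c
      have := (this.exp).const_mul (c ^ k)
      rw [show c ^ (k + 1) * Real.exp (c * t) = c ^ k * (Real.exp (c * t) * c) by ring]
      exact this
    have h2 : HasDerivAt (fun t : ℝ => (derivative^[k] p).eval t)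
        ((derivative^[k + 1] p).eval t) t := by
      rw [Function.iterate_succ_apply']
      exact (derivative^[k] p).hasDerivAt t
    exact (h1.sub h2).deriv

theorem watson_reciprocal_schur_pos (n : ℕ) (hn : 2 ≤ n) (a : ℝ) (ha : 1 < a)
    (x : Fin n → ℝ) (hinj : Function.Injective x) :
    0 < ∑ j, a ^ (x j) / ∏ k ∈ Finset.univ.erase j, (x j - x k) := by
  classical
  have ha0 : 0 < a := lt_trans one_pos ha
  set c := Real.log a with hcdef
  have hc : 0 < c := Real.log_pos ha
  have hrpow : ∀ t : ℝ, a ^ t = Real.exp (c * t) := fun t => Real.rpow_def_of_pos ha0 t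
  have hinjOn : Set.InjOn x (Finset.univ : Finset (Fin n)) := Function.Injective.injOn hinj
  set r : Fin n → ℝ := fun j => Real.exp (c * x j) with hr
  set p := Lagrange.interpolate Finset.univ x r with hp
  have hcardE : ∀ j : Fin n, (Finset.univ.erase j).card = n - 1 := by
    intro j
    rw [Finset.card_erase_of_mem (Finset.mem_univ j), Finset.card_univ, Fintype.card_fin]
  have hcoeff : p.coeff (n - 1) = ∑ j, r j * Lagrange.nodalWeight Finset.univ x j := by
    rw [hp, Lagrange.interpolate_apply, Polynomial.finset_sum_coeff]
    refine Finset.sum_congr rfl fun j _ => ?_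
    rw [Lagrange.basis_eq_prod_sub_inv_mul_nodal_div (Finset.mem_univ j),
      ← Lagrange.nodal_erase_eq_nodal_div (Finset.mem_univ j), ← mul_assoc, ← Polynomial.C_mul,
      Polynomial.coeff_C_mul]
    have hmonic : (Lagrange.nodal (Finset.univ.erase j) x).Monic := Lagrange.nodal_monic
    have hdeg : (Lagrange.nodal (Finset.univ.erase j) x).natDegree = n - 1 := by
      rw [Lagrange.natDegree_nodal, hcardE]
    rw [← hdeg, hmonic.coeff_natDegree, mul_one]
  set g : ℝ → ℝ := fun t => Real.exp (c * t) - p.eval t with hg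
  have hdiff : ∀ m, Differentiable ℝ (iteratedDeriv m g) := by
    intro m
    rw [hg, iteratedDeriv_exp_sub_poly]
    exact ((Real.differentiable_exp.comp (differentiable_id.const_mul c)).const_mul _).sub
      (Polynomial.derivative^[m] p).differentiable
  obtain ⟨ξ, hξ⟩ := iterated_rolle (n - 1) g hdiff (Finset.image x Finset.univ)
    (by rw [Finset.card_image_of_injective _ hinj, Finset.card_univ, Fintype.card_fin]; omega)
    (by
      intro y hy
      obtain ⟨j, _, rfl⟩ := Finset.mem_image.mp hy
      simp only [hg]
      rw [Lagrange.eval_interpolate_at_node r hinjOn (Finset.mem_univ j)]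
      simp [hr])
  rw [hg, iteratedDeriv_exp_sub_poly] at hξ
  have hq : Polynomial.derivative^[n - 1] p = Polynomial.C ((Polynomial.derivative^[n - 1] p).coeff 0) := by
    apply Polynomial.eq_C_of_natDegree_le_zero
    have h1 := Polynomial.natDegree_iterate_derivative p (n - 1)
    have h2 : p.natDegree ≤ n - 1 := by
      rcases eq_or_ne p 0 with h | h
      · simp [h]
      · have := Lagrange.degree_interpolate_lt r hinjOn
        rw [← hp] at this
        have := (Polynomial.natDegree_lt_iff_degree_lt h).mpr
          (by simpa [Finset.card_univ] using this)
        omega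
    omega
  have hc0 : (Polynomial.derivative^[n - 1] p).coeff 0 = (Nat.factorial (n - 1) : ℝ) * p.coeff (n - 1) := by
    rw [Polynomial.coeff_iterate_derivative]
    simp [Nat.descFactorial_self, nsmul_eq_mul]
  have hval : c ^ (n - 1) * Real.exp (c * ξ) = (Nat.factorial (n - 1) : ℝ) * p.coeff (n - 1) := by
    have := sub_eq_zero.mp hξ
    rw [this, hq, Polynomial.eval_C, hc0]
  have hS : (∑ j, a ^ (x j) / ∏ k ∈ Finset.univ.erase j, (x j - x k)) = p.coeff (n - 1) := by
    rw [hcoeff]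
    refine Finset.sum_congr rfl fun j _ => ?_
    rw [hrpow, Lagrange.nodalWeight, div_eq_mul_inv, ← Finset.prod_inv_distrib]
  rw [hS]
  have hfac : (0 : ℝ) < (Nat.factorial (n - 1) : ℝ) := by positivity
  have : (0 : ℝ) < c ^ (n - 1) * Real.exp (c * ξ) := by positivity
  nlinarith [hval]
end

section
/- Let 0 < a < 1 and let x_1, …, x_n be distinct real numbers (n ≥ 2). Then (−1)^{n+1} ∑_{j=1}^n a^{x_j}/∏_{k≠j}(x_j − x_k) > 0. -/
open Polynomial Finset
open scoped ContDiff

private lemma wat_poly_contDiff (p : ℝ[X]) : ContDiff ℝ ∞ fun t : ℝ => p.eval t := by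
  induction p using Polynomial.induction_on' with
  | add p q hp hq => simpa [Polynomial.eval_add] using hp.add hq
  | monomial k c =>
      simpa [Polynomial.eval_monomial] using (contDiff_const (c := c)).mul (contDiff_id.pow k)

private lemma wat_iteratedDeriv_poly (m : ℕ) (p : ℝ[X]) :
    iteratedDeriv m (fun t : ℝ => p.eval t) = fun t => (Polynomial.derivative^[m] p).eval t := by
  induction m generalizing p with
  | zero => simp
  | succ m ih =>
      rw [iteratedDeriv_succ']
      have h : deriv (fun t : ℝ => p.eval t) = fun t => (Polynomial.derivative p).eval t := by
        funext t; exact Polynomial.deriv (p := p)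
      rw [h, ih, Function.iterate_succ_apply]

private lemma wat_contDiff_exp (b : ℝ) : ContDiff ℝ ∞ fun t : ℝ => Real.exp (b * t) :=
  Real.contDiff_exp.comp (contDiff_const.mul contDiff_id)

private lemma wat_iteratedDeriv_exp (b : ℝ) (m : ℕ) :
    iteratedDeriv m (fun t : ℝ => Real.exp (b * t)) = fun t => b ^ m * Real.exp (b * t) := by
  induction m with
  | zero => simp
  | succ m ih =>
      rw [iteratedDeriv_succ, ih]
      funext t
      have h : HasDerivAt (fun t : ℝ => b ^ m * Real.exp (b * t))
          (b ^ m * (Real.exp (b * t) * (b * 1))) t := by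
        have h1 : HasDerivAt (fun y : ℝ => b * y) (b * 1) t := (hasDerivAt_id t).const_mul b
        have h2 := (Real.hasDerivAt_exp (b * t)).comp t h1
        exact h2.const_mul _
      rw [h.deriv]; ring

private lemma wat_iter_rolle : ∀ (m : ℕ) (g : ℝ → ℝ), ContDiff ℝ ∞ g →
    ∀ y : Fin (m + 1) → ℝ, StrictMono y → (∀ i, g (y i) = 0) →
    ∃ ξ, iteratedDeriv m g ξ = 0 := by
  intro m
  induction m with
  | zero => intro g hg y hy hz; exact ⟨y 0, by simpa using hz 0⟩
  | succ m ih =>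
      intro g hg y hy hz
      have H : ∀ i : Fin (m + 1), ∃ c ∈ Set.Ioo (y i.castSucc) (y i.succ), deriv g c = 0 :=
        fun i => exists_deriv_eq_zero (hy (Fin.castSucc_lt_succ (i := i)))
          hg.continuous.continuousOn (by rw [hz, hz])
      choose ξ hmem hz' using H
      have hξ : StrictMono ξ := by
        rw [Fin.strictMono_iff_lt_succ]
        intro i
        calc ξ i.castSucc < y i.castSucc.succ := (hmem i.castSucc).2
          _ ≤ y i.succ.castSucc := le_of_eq (by rw [Fin.succ_castSucc])
          _ < ξ i.succ := (hmem i.succ).1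
      have hg' : ContDiff ℝ ∞ (deriv g) := (contDiff_infty_iff_deriv.mp hg).2
      obtain ⟨c, hc⟩ := ih (deriv g) hg' ξ hξ hz'
      exact ⟨c, by rw [iteratedDeriv_succ']; exact hc⟩

private lemma wat_key (n : ℕ) (hn : 2 ≤ n) (a : ℝ) (ha0 : 0 < a) (ha1 : a < 1)
    (y : Fin n → ℝ) (hy : StrictMono y) :
    0 < (-1 : ℝ) ^ (n + 1) * ∑ j, a ^ (y j) / ∏ k ∈ Finset.univ.erase j, (y j - y k) := by
  set b := Real.log a with hb_def
  have hb : b < 0 := Real.log_neg ha0 ha1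
  set f : ℝ → ℝ := fun t => Real.exp (b * t) with hf_def
  have hfy : ∀ t : ℝ, a ^ t = f t := fun t => Real.rpow_def_of_pos ha0 t
  have hinj : Set.InjOn y (Finset.univ : Finset (Fin n)) := fun i _ j _ h => hy.injective h
  set p : ℝ[X] := Lagrange.interpolate Finset.univ y (fun i => f (y i)) with hp_def
  set m := n - 1 with hm_def
  have hmn : m + 1 = n := by omega
  set S : ℝ := ∑ j, f (y j) / ∏ k ∈ Finset.univ.erase j, (y j - y k) with hS_def
  -- coefficient of p at degree m equals S
  have hcard : (Finset.univ : Finset (Fin n)).card = n := Finset.card_fin n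
  have hcoeff : p.coeff m = S := by
    rw [hp_def, Lagrange.interpolate_apply, finset_sum_coeff]
    rw [hS_def]
    refine Finset.sum_congr rfl fun i _ => ?_
    rw [coeff_C_mul]
    have hd : (Lagrange.basis Finset.univ y i).natDegree = m := by
      rw [Lagrange.natDegree_basis hinj (Finset.mem_univ i), hcard]
    have hl : (Lagrange.basis Finset.univ y i).coeff m
        = ∏ k ∈ Finset.univ.erase i, (y i - y k)⁻¹ := by
      rw [← hd, coeff_natDegree, Lagrange.basis, leadingCoeff_prod]
      refine Finset.prod_congr rfl fun k hk => ?_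
      have hne : y i ≠ y k := by
        intro h
        exact (Finset.mem_erase.mp hk).1 (hy.injective h).symm
      rw [Lagrange.basisDivisor, leadingCoeff_mul, leadingCoeff_C, leadingCoeff_X_sub_C, mul_one]
    rw [hl, div_eq_mul_inv, ← Finset.prod_inv_distrib]
  have hdeg : p.natDegree ≤ m := by
    rcases eq_or_ne p 0 with h0 | h0
    · simp [h0]
    · have := Lagrange.degree_interpolate_lt (fun i => f (y i)) hinj
      rw [← hp_def, hcard] at this
      have h2 := (Polynomial.natDegree_lt_iff_degree_lt h0).mpr this
      omega
  -- iterated derivative of p is the constant m! * S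
  have hiterp : Polynomial.derivative^[m] p = C ((m.factorial : ℝ) * S) := by
    have h0 : (Polynomial.derivative^[m] p).natDegree ≤ 0 :=
      le_trans (natDegree_iterate_derivative p m) (by omega)
    rw [eq_C_of_natDegree_le_zero h0]
    congr 1
    rw [coeff_iterate_derivative, zero_add, Nat.descFactorial_self, hcoeff, nsmul_eq_mul]
  -- the function g and its zeros
  set g : ℝ → ℝ := fun t => f t - p.eval t with hg_def
  have hgz : ∀ i, g (y i) = 0 := by
    intro i
    have := Lagrange.eval_interpolate_at_node (fun i => f (y i)) hinj (Finset.mem_univ i)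
    rw [hg_def]
    simp only [← hp_def] at this ⊢
    rw [this, sub_self]
  have hgc : ContDiff ℝ ∞ g := (wat_contDiff_exp b).sub (wat_poly_contDiff p)
  obtain ⟨ξ, hξ⟩ := wat_iter_rolle m g hgc (fun i => y (Fin.cast hmn i))
    (fun i j hij => hy (by simp only [Fin.lt_def, Fin.coe_cast] at hij ⊢; exact hij))
    (fun i => hgz _)
  -- compute iteratedDeriv m g
  have hsplit : iteratedDeriv m g ξ
      = iteratedDeriv m f ξ - iteratedDeriv m (fun t => p.eval t) ξ := by
    have h1 : ContDiffOn ℝ (m : ℕ∞) f Set.univ := ((wat_contDiff_exp b).of_le (WithTop.coe_le_coe.mpr le_top)).contDiffOn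
    have h2 : ContDiffOn ℝ (m : ℕ∞) (fun t : ℝ => p.eval t) Set.univ :=
      ((wat_poly_contDiff p).of_le (WithTop.coe_le_coe.mpr le_top)).contDiffOn
    have hsub : g = f - (fun t => p.eval t) := rfl
    rw [hsub, ← iteratedDerivWithin_univ,
      iteratedDerivWithin_sub (Set.mem_univ ξ) uniqueDiffOn_univ (h1 ξ (Set.mem_univ ξ)) (h2 ξ (Set.mem_univ ξ)),
      iteratedDerivWithin_univ, iteratedDerivWithin_univ]
  rw [hsplit, wat_iteratedDeriv_exp, wat_iteratedDeriv_poly, hiterp] at hξ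
  simp only [eval_C, sub_eq_zero] at hξ
  -- conclude
  have hS : S = b ^ m * Real.exp (b * ξ) / (m.factorial : ℝ) := by
    field_simp at hξ ⊢
    linarith [hξ]
  have hsum : (∑ j, a ^ (y j) / ∏ k ∈ Finset.univ.erase j, (y j - y k)) = S := by
    rw [hS_def]
    exact Finset.sum_congr rfl fun j _ => by rw [hfy]
  rw [hsum, hS]
  have hpow : (-1 : ℝ) ^ (n + 1) * b ^ m = (-b) ^ m := by
    have : n + 1 = m + 2 := by omega
    rw [this, neg_pow]
    ring
  have hpos : 0 < (-b) ^ m := pow_pos (by linarith) m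
  calc (0:ℝ) < (-b) ^ m * Real.exp (b * ξ) / (m.factorial : ℝ) := by
        apply div_pos (mul_pos hpos (Real.exp_pos _))
        exact_mod_cast Nat.factorial_pos m
    _ = (-1 : ℝ) ^ (n + 1) * (b ^ m * Real.exp (b * ξ) / (m.factorial : ℝ)) := by
        rw [← hpow]; ring

theorem watson_reciprocal_schur_alt (n : ℕ) (hn : 2 ≤ n) (a : ℝ) (ha0 : 0 < a) (ha1 : a < 1)
    (x : Fin n → ℝ) (hinj : Function.Injective x) :
    0 < (-1 : ℝ) ^ (n + 1) * ∑ j, a ^ (x j) / ∏ k ∈ Finset.univ.erase j, (x j - x k) := by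
  set σ := Tuple.sort x with hσ
  have hmono : StrictMono (x ∘ σ) :=
    (Tuple.monotone_sort x).strictMono_of_injective (hinj.comp σ.injective)
  have hkey := wat_key n hn a ha0 ha1 (x ∘ σ) hmono
  have hsum : (∑ j, a ^ ((x ∘ σ) j) / ∏ k ∈ Finset.univ.erase j, ((x ∘ σ) j - (x ∘ σ) k))
      = ∑ j, a ^ (x j) / ∏ k ∈ Finset.univ.erase j, (x j - x k) := by
    rw [← Equiv.sum_comp σ (fun j => a ^ (x j) / ∏ k ∈ Finset.univ.erase j, (x j - x k))]
    refine Finset.sum_congr rfl fun j _ => ?_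
    simp only [Function.comp_apply]
    congr 1
    refine Finset.prod_nbij' (fun k => σ k) (fun k => σ.symm k) ?_ ?_ ?_ ?_ ?_
    · intro k hk
      simp only [Finset.mem_erase, Finset.mem_univ, and_true] at hk ⊢
      exact fun h => hk (σ.injective h)
    · intro k hk
      simp only [Finset.mem_erase, Finset.mem_univ, and_true] at hk ⊢
      intro h
      exact hk (by rw [← h, Equiv.apply_symm_apply])
    · intro k _; exact σ.symm_apply_apply k
    · intro k _; exact σ.apply_symm_apply k
    · intro k _; rfl
  rw [hsum] at hkey
  exact hkey
end

section
/- Let f : (α, β) → ℝ be a nonnegative function with sup f < 4 · inf f (where both are finite and the infimum is over (α, β)). Then f belongs to class Q on (α, β), i.e., for all x ≤ z in (α, β) and all 0 < τ < 1, f((1−τ)x + τz) ≤ f(x)/(1−τ) + f(z)/τ. -/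
/-!
Since `1/(1-τ) + 1/τ = 1/(τ(1-τ)) ≥ 4` on `(0,1)`, the right-hand side is at least
`4 · inf f`, which exceeds `sup f ≥ f((1-τ)x + τz)`.
-/

lemma four_le_inv_one_sub_add_inv {τ : ℝ} (hτ0 : 0 < τ) (hτ1 : τ < 1) :
    4 ≤ (1 - τ)⁻¹ + τ⁻¹ := by
  have h1τ : 0 < 1 - τ := by linarith
  rw [inv_add_inv h1τ.ne' hτ0.ne', le_div_iff₀ (by positivity)]
  nlinarith [sq_nonneg (2 * τ - 1)]

lemma le_div_one_sub_add_div_of_le_four_mul {a b c m τ : ℝ} (hm : 0 ≤ m) (ha : m ≤ a)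
    (hb : m ≤ b) (hc : c ≤ 4 * m) (hτ0 : 0 < τ) (hτ1 : τ < 1) :
    c ≤ a / (1 - τ) + b / τ := by
  have h1τ : 0 < 1 - τ := by linarith
  calc c ≤ 4 * m := hc
    _ ≤ ((1 - τ)⁻¹ + τ⁻¹) * m :=
      mul_le_mul_of_nonneg_right (four_le_inv_one_sub_add_inv hτ0 hτ1) hm
    _ = m / (1 - τ) + m / τ := by ring
    _ ≤ a / (1 - τ) + b / τ := by gcongr

theorem classQ_of_sup_lt_four_inf_general (α β : ℝ) (f : ℝ → ℝ)
    (hnonneg : ∀ t ∈ Set.Ioo α β, 0 ≤ f t)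
    (hbdd : BddAbove (f '' Set.Ioo α β))
    (hsupinf : sSup (f '' Set.Ioo α β) < 4 * sInf (f '' Set.Ioo α β)) :
    ∀ x ∈ Set.Ioo α β, ∀ z ∈ Set.Ioo α β, x ≤ z → ∀ τ : ℝ, 0 < τ → τ < 1 →
      f ((1 - τ) * x + τ * z) ≤ f x / (1 - τ) + f z / τ := by
  intro x hx z hz _ τ hτ0 hτ1
  have hmid : (1 - τ) * x + τ * z ∈ Set.Ioo α β :=
    convex_Ioo α β hx hz (by linarith) hτ0.le (by ring)
  have himage_nonneg : ∀ y ∈ f '' Set.Ioo α β, 0 ≤ y := by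
    rintro _ ⟨t, ht, rfl⟩
    exact hnonneg t ht
  have hbddBelow : BddBelow (f '' Set.Ioo α β) := ⟨0, himage_nonneg⟩
  have hinf_nonneg : 0 ≤ sInf (f '' Set.Ioo α β) := le_csInf ⟨f x, x, hx, rfl⟩ himage_nonneg
  have hfmid : f ((1 - τ) * x + τ * z) ≤ 4 * sInf (f '' Set.Ioo α β) :=
    (le_csSup hbdd ⟨_, hmid, rfl⟩).trans hsupinf.le
  exact le_div_one_sub_add_div_of_le_four_mul hinf_nonneg (csInf_le hbddBelow ⟨x, hx, rfl⟩)
    (csInf_le hbddBelow ⟨z, hz, rfl⟩) hfmid hτ0 hτ1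

theorem classQ_of_sup_lt_four_inf (α β : ℝ) (hαβ : α < β) (f : ℝ → ℝ)
    (hnonneg : ∀ t ∈ Set.Ioo α β, 0 ≤ f t)
    (hbdd : BddAbove (f '' Set.Ioo α β))
    (hsupinf : sSup (f '' Set.Ioo α β) < 4 * sInf (f '' Set.Ioo α β)) :
    ∀ x ∈ Set.Ioo α β, ∀ z ∈ Set.Ioo α β, x ≤ z → ∀ τ : ℝ, 0 < τ → τ < 1 →
      f ((1 - τ) * x + τ * z) ≤ f x / (1 - τ) + f z / τ :=
  classQ_of_sup_lt_four_inf_general α β f hnonneg hbdd hsupinf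
end
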